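/- arXiv:0704.3885 — 14 statements merged into one kernel-verified Lean document; each statement's English description precedes it below -/
import Mathlib

section
/- The (n+1)-dimensional complex algebra with basis e₀,…,eₙ and nonzero products [e₀,e₀]=e₂, [eᵢ,e₀]=e_{i+1} for 2≤i≤n-1, [e₀,e₁]=Σ_{k=3}^{n} β_k e_k, [e₁,e₁]=γ eₙ, [e_j,e₁]=Σ_{k=3}^{n+1-j} β_k e_{j+k-1} for 2≤j≤n-2, is a Leibniz algebra for every choice of parameters β₃,…,βₙ,γ ∈ ℂ. -/
open scoped BigOperators

/-- Structure constants of the second-class algebra `L(β₃,…,βₙ,γ)`: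
`c n β γ i j k` is the coefficient of `e_k` in `[e_i, e_j]`. -/
noncomputable def secondClassC (n : ℕ) (β : ℕ → ℂ) (γ : ℂ) (i j k : ℕ) : ℂ :=
  if i = 0 ∧ j = 0 then (if k = 2 then 1 else 0)
  else if 2 ≤ i ∧ i ≤ n - 1 ∧ j = 0 then (if k = i + 1 then 1 else 0)
  else if i = 0 ∧ j = 1 then (if 3 ≤ k ∧ k ≤ n then β k else 0)
  else if i = 1 ∧ j = 1 then (if k = n then γ else 0)
  else if 2 ≤ i ∧ i ≤ n - 2 ∧ j = 1 then (if i + 2 ≤ k ∧ k ≤ n then β (k - i + 1) else 0)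
  else 0

/-- The bilinear bracket on `ℂ^{n+1}` determined by the above structure constants. -/
noncomputable def secondClassBracket (n : ℕ) (β : ℕ → ℂ) (γ : ℂ)
    (x y : Fin (n + 1) → ℂ) : Fin (n + 1) → ℂ :=
  fun k => ∑ i : Fin (n + 1), ∑ j : Fin (n + 1),
    x i * y j * secondClassC n β γ (i : ℕ) (j : ℕ) (k : ℕ)

variable (n : ℕ) (β : ℕ → ℂ) (γ : ℂ)

lemma c_snd_ge (i j k : ℕ) (hj : 2 ≤ j) : secondClassC n β γ i j k = 0 := by
  unfold secondClassC; split_ifs <;> first | rfl | (exfalso; omega) | (exfalso; tauto)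

lemma c_k_lo (hn : 3 ≤ n) (i j k : ℕ) (hk : k ≤ 1) : secondClassC n β γ i j k = 0 := by
  unfold secondClassC; split_ifs <;> first | rfl | (exfalso; omega) | (exfalso; tauto)

lemma c00 (m : ℕ) : secondClassC n β γ 0 0 m = if m = 2 then 1 else 0 := by
  unfold secondClassC; split_ifs <;> first | rfl | (exfalso; omega) | (exfalso; tauto)

lemma c_mid0 (a m : ℕ) (h : 2 ≤ a ∧ a ≤ n - 1) :
    secondClassC n β γ a 0 m = if m = a + 1 then 1 else 0 := by
  unfold secondClassC; split_ifs <;> first | rfl | (exfalso; omega) | (exfalso; tauto)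

lemma c_else0 (a m : ℕ) (h1 : a ≠ 0) (h2 : ¬(2 ≤ a ∧ a ≤ n - 1)) :
    secondClassC n β γ a 0 m = 0 := by
  unfold secondClassC; split_ifs <;> first | rfl | (exfalso; omega) | (exfalso; tauto)

lemma c01 (m : ℕ) : secondClassC n β γ 0 1 m = if 3 ≤ m ∧ m ≤ n then β m else 0 := by
  unfold secondClassC; split_ifs <;> first | rfl | (exfalso; omega) | (exfalso; tauto)

lemma c11 (m : ℕ) : secondClassC n β γ 1 1 m = if m = n then γ else 0 := by
  unfold secondClassC; split_ifs <;> first | rfl | (exfalso; omega) | (exfalso; tauto)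

lemma c_mid1 (a m : ℕ) (h : 2 ≤ a ∧ a ≤ n - 2) :
    secondClassC n β γ a 1 m = if a + 2 ≤ m ∧ m ≤ n then β (m - a + 1) else 0 := by
  unfold secondClassC; split_ifs <;> first | rfl | (exfalso; omega) | (exfalso; tauto)

lemma c_else1 (a m : ℕ) (h0 : a ≠ 0) (h1 : a ≠ 1) (h2 : ¬(2 ≤ a ∧ a ≤ n - 2)) :
    secondClassC n β γ a 1 m = 0 := by
  unfold secondClassC; split_ifs <;> first | rfl | (exfalso; omega) | (exfalso; tauto)

/-- closed form of the double products -/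
noncomputable def EE (n : ℕ) (β : ℕ → ℂ) (a k : ℕ) : ℂ :=
  if a = 0 then (if 4 ≤ k ∧ k ≤ n then β (k - 1) else 0)
  else if 2 ≤ a ∧ a ≤ n - 2 then (if a + 3 ≤ k ∧ k ≤ n then β (k - a) else 0)
  else 0

lemma L1 (hn : 3 ≤ n) (a k : ℕ) :
    (∑ m ∈ Finset.range (n + 1), secondClassC n β γ a 0 m * secondClassC n β γ m 1 k)
      = EE n β a k := by
  by_cases h0 : a = 0
  · subst h0
    have hterm : ∀ m ∈ Finset.range (n + 1),
        secondClassC n β γ 0 0 m * secondClassC n β γ m 1 k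
          = if m = 2 then secondClassC n β γ m 1 k else 0 := by
      intro m _; rw [c00]; split_ifs <;> simp
    rw [Finset.sum_congr rfl hterm, Finset.sum_ite_eq' (Finset.range (n + 1)) 2,
      if_pos (by simp only [Finset.mem_range]; omega : 2 ∈ Finset.range (n + 1))]
    by_cases h2 : 2 ≤ n - 2
    · rw [c_mid1 n β γ 2 k ⟨le_refl 2, h2⟩]
      unfold EE
      rw [if_pos rfl]
      split_ifs with h <;> first | rfl | (congr 1 <;> first | rfl | omega) | (exfalso; omega)
    · rw [c_else1 n β γ 2 k (by omega) (by omega) (by omega)]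
      unfold EE
      rw [if_pos rfl]
      split_ifs with h
      · exfalso; omega
      · rfl
  by_cases hmid : 2 ≤ a ∧ a ≤ n - 1
  · have hterm : ∀ m ∈ Finset.range (n + 1),
        secondClassC n β γ a 0 m * secondClassC n β γ m 1 k
          = if m = a + 1 then secondClassC n β γ m 1 k else 0 := by
      intro m _; rw [c_mid0 n β γ a m hmid]; split_ifs <;> simp
    rw [Finset.sum_congr rfl hterm, Finset.sum_ite_eq' (Finset.range (n + 1)) (a + 1),
      if_pos (by simp only [Finset.mem_range]; omega : a + 1 ∈ Finset.range (n + 1))]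
    by_cases h2 : a + 1 ≤ n - 2
    · rw [c_mid1 n β γ (a + 1) k ⟨by omega, h2⟩]
      unfold EE
      rw [if_neg h0]
      split_ifs <;> first | rfl | (congr 1 <;> first | rfl | omega) | (exfalso; omega)
    · rw [c_else1 n β γ (a + 1) k (by omega) (by omega) (by omega)]
      unfold EE
      rw [if_neg h0]
      split_ifs <;> first | rfl | (exfalso; omega)
  · have hterm : ∀ m ∈ Finset.range (n + 1),
        secondClassC n β γ a 0 m * secondClassC n β γ m 1 k = 0 := by
      intro m _; rw [c_else0 n β γ a m h0 hmid, zero_mul]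
    rw [Finset.sum_eq_zero hterm]
    unfold EE
    rw [if_neg h0, if_neg (by omega)]

lemma L2 (hn : 3 ≤ n) (a k : ℕ) :
    (∑ m ∈ Finset.range (n + 1), secondClassC n β γ a 1 m * secondClassC n β γ m 0 k)
      = EE n β a k := by
  by_cases h0 : a = 0
  · subst h0
    have hterm : ∀ m ∈ Finset.range (n + 1),
        secondClassC n β γ 0 1 m * secondClassC n β γ m 0 k
          = if m = k - 1 then (if 4 ≤ k ∧ k ≤ n then β (k - 1) else 0) else 0 := by
      intro m hm
      simp only [Finset.mem_range] at hm
      rw [c01]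
      by_cases hm0 : m = 0
      · subst hm0
        rw [c00]
        split_ifs <;> first | (exfalso; omega) | simp
      by_cases hm2 : 2 ≤ m ∧ m ≤ n - 1
      · rw [c_mid0 n β γ m k hm2]
        simp only [mul_ite, ite_mul, mul_one, mul_zero, zero_mul, one_mul]
        split_ifs <;> first | rfl | (congr 1 <;> first | rfl | omega) | (exfalso; omega)
      · rw [c_else0 n β γ m k hm0 hm2, mul_zero]
        split_ifs <;> first | rfl | (exfalso; omega)
    rw [Finset.sum_congr rfl hterm, Finset.sum_ite_eq' (Finset.range (n + 1)) (k - 1)]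
    unfold EE
    rw [if_pos rfl]
    simp only [Finset.mem_range]
    split_ifs <;> first | rfl | (exfalso; omega)
  by_cases h1 : a = 1
  · subst h1
    have hterm : ∀ m ∈ Finset.range (n + 1),
        secondClassC n β γ 1 1 m * secondClassC n β γ m 0 k = 0 := by
      intro m _
      rw [c11]
      by_cases hmn : m = n
      · subst hmn
        rw [c_else0 _ _ _ _ k (by omega) (by omega), mul_zero]
      · rw [if_neg hmn, zero_mul]
    rw [Finset.sum_eq_zero hterm]
    unfold EE
    rw [if_neg (by omega), if_neg (by omega)]
  by_cases hmid : 2 ≤ a ∧ a ≤ n - 2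
  · have hterm : ∀ m ∈ Finset.range (n + 1),
        secondClassC n β γ a 1 m * secondClassC n β γ m 0 k
          = if m = k - 1 then (if a + 3 ≤ k ∧ k ≤ n then β (k - a) else 0) else 0 := by
      intro m hm
      simp only [Finset.mem_range] at hm
      rw [c_mid1 n β γ a m hmid]
      by_cases hm0 : m = 0
      · subst hm0
        rw [c00]
        split_ifs <;> first | rfl | (exfalso; omega) | simp
      by_cases hm2 : 2 ≤ m ∧ m ≤ n - 1
      · rw [c_mid0 n β γ m k hm2]
        simp only [mul_ite, ite_mul, mul_one, mul_zero, zero_mul, one_mul]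
        split_ifs <;> first | rfl | (congr 1 <;> first | rfl | omega) | (exfalso; omega)
      · rw [c_else0 n β γ m k hm0 hm2, mul_zero]
        split_ifs <;> first | rfl | (exfalso; omega)
    rw [Finset.sum_congr rfl hterm, Finset.sum_ite_eq' (Finset.range (n + 1)) (k - 1)]
    unfold EE
    rw [if_neg h0, if_pos hmid]
    simp only [Finset.mem_range]
    split_ifs <;> first | rfl | (exfalso; omega)
  · have hterm : ∀ m ∈ Finset.range (n + 1),
        secondClassC n β γ a 1 m * secondClassC n β γ m 0 k = 0 := by
      intro m _; rw [c_else1 n β γ a m h0 h1 hmid, zero_mul]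
    rw [Finset.sum_eq_zero hterm]
    unfold EE
    rw [if_neg h0, if_neg hmid]


lemma keyF (hn : 3 ≤ n) (a k : ℕ) :
    (∑ i : Fin (n + 1), secondClassC n β γ a 0 (i : ℕ) * secondClassC n β γ (i : ℕ) 1 k)
      = ∑ i : Fin (n + 1), secondClassC n β γ a 1 (i : ℕ) * secondClassC n β γ (i : ℕ) 0 k := by
  rw [Fin.sum_univ_eq_sum_range (fun m => secondClassC n β γ a 0 m * secondClassC n β γ m 1 k),
    Fin.sum_univ_eq_sum_range (fun m => secondClassC n β γ a 1 m * secondClassC n β γ m 0 k),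
    L1 n β γ hn a k, L2 n β γ hn a k]

lemma Gsym (hn : 3 ≤ n) (a b j k : ℕ) :
    (∑ i : Fin (n + 1), secondClassC n β γ a b (i : ℕ) * secondClassC n β γ (i : ℕ) j k)
      = ∑ i : Fin (n + 1), secondClassC n β γ a j (i : ℕ) * secondClassC n β γ (i : ℕ) b k := by
  rcases eq_or_ne b j with hbj | hbj
  · rw [hbj]
  by_cases hb : 2 ≤ b
  · rw [Finset.sum_eq_zero fun i _ => by rw [c_snd_ge n β γ a b _ hb, zero_mul],
      Finset.sum_eq_zero fun i _ => by rw [c_snd_ge n β γ _ b k hb, mul_zero]]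
  by_cases hj : 2 ≤ j
  · rw [Finset.sum_eq_zero fun i _ => by rw [c_snd_ge n β γ _ j k hj, mul_zero],
      Finset.sum_eq_zero fun i _ => by rw [c_snd_ge n β γ a j _ hj, zero_mul]]
  have : (b = 0 ∧ j = 1) ∨ (b = 1 ∧ j = 0) := by omega
  rcases this with ⟨rfl, rfl⟩ | ⟨rfl, rfl⟩
  · exact keyF n β γ hn a k
  · exact (keyF n β γ hn a k).symm

lemma sum_swap4 {M : Type*} [AddCommMonoid M] {ι : Type*} (s : Finset ι)
    (f : ι → ι → ι → ι → M) :
    (∑ i ∈ s, ∑ j ∈ s, ∑ a ∈ s, ∑ b ∈ s, f i j a b)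
      = ∑ a ∈ s, ∑ b ∈ s, ∑ j ∈ s, ∑ i ∈ s, f i j a b := by
  calc (∑ i ∈ s, ∑ j ∈ s, ∑ a ∈ s, ∑ b ∈ s, f i j a b)
      = ∑ j ∈ s, ∑ i ∈ s, ∑ a ∈ s, ∑ b ∈ s, f i j a b := Finset.sum_comm
    _ = ∑ j ∈ s, ∑ a ∈ s, ∑ i ∈ s, ∑ b ∈ s, f i j a b :=
        Finset.sum_congr rfl fun j _ => Finset.sum_comm
    _ = ∑ j ∈ s, ∑ a ∈ s, ∑ b ∈ s, ∑ i ∈ s, f i j a b :=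
        Finset.sum_congr rfl fun j _ => Finset.sum_congr rfl fun a _ => Finset.sum_comm
    _ = ∑ a ∈ s, ∑ j ∈ s, ∑ b ∈ s, ∑ i ∈ s, f i j a b := Finset.sum_comm
    _ = ∑ a ∈ s, ∑ b ∈ s, ∑ j ∈ s, ∑ i ∈ s, f i j a b :=
        Finset.sum_congr rfl fun a _ => Finset.sum_comm

lemma expand (x u v : Fin (n + 1) → ℂ) (k : Fin (n + 1)) :
    secondClassBracket n β γ (secondClassBracket n β γ x u) v k
      = ∑ a : Fin (n + 1), ∑ b : Fin (n + 1), ∑ j : Fin (n + 1),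
          x a * u b * v j *
            (∑ i : Fin (n + 1),
              secondClassC n β γ (a : ℕ) (b : ℕ) (i : ℕ) * secondClassC n β γ (i : ℕ) (j : ℕ) (k : ℕ)) := by
  simp only [secondClassBracket, Finset.sum_mul, Finset.mul_sum]
  rw [sum_swap4]
  exact Finset.sum_congr rfl fun a _ => Finset.sum_congr rfl fun b _ =>
    Finset.sum_congr rfl fun j _ => Finset.sum_congr rfl fun i _ => by ring

lemma bracket_lo (hn : 3 ≤ n) (y z : Fin (n + 1) → ℂ) (j : Fin (n + 1)) (hj : (j : ℕ) ≤ 1) :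
    secondClassBracket n β γ y z j = 0 := by
  unfold secondClassBracket
  exact Finset.sum_eq_zero fun a _ => Finset.sum_eq_zero fun b _ => by
    rw [c_k_lo n β γ hn _ _ _ hj, mul_zero]


/-- The (n+1)-dimensional complex algebra with basis `e₀,…,eₙ` and nonzero products
`[e₀,e₀]=e₂`, `[eᵢ,e₀]=e_{i+1}` (2 ≤ i ≤ n-1), `[e₀,e₁]=Σ_{k=3}^n β_k e_k`,
`[e₁,e₁]=γ eₙ`, `[e_j,e₁]=Σ_{k=3}^{n+1-j} β_k e_{j+k-1}` (2 ≤ j ≤ n-2)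
is a Leibniz algebra for every choice of the parameters. -/
theorem secondClass_is_leibniz (n : ℕ) (hn : 3 ≤ n) (β : ℕ → ℂ) (γ : ℂ) :
    ∀ x y z : Fin (n + 1) → ℂ,
      secondClassBracket n β γ x (secondClassBracket n β γ y z) =
        secondClassBracket n β γ (secondClassBracket n β γ x y) z -
          secondClassBracket n β γ (secondClassBracket n β γ x z) y := by
  intro x y z
  funext k
  have hL0 : ∀ w : Fin (n + 1) → ℂ, (∀ j : Fin (n + 1), (j : ℕ) ≤ 1 → w j = 0) →
      secondClassBracket n β γ x w k = 0 := by
    intro w hw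
    unfold secondClassBracket
    refine Finset.sum_eq_zero fun i _ => Finset.sum_eq_zero fun j _ => ?_
    by_cases hj : (j : ℕ) ≤ 1
    · rw [hw j hj, mul_zero, zero_mul]
    · rw [c_snd_ge n β γ _ _ _ (by omega), mul_zero]
  have hL : secondClassBracket n β γ x (secondClassBracket n β γ y z) k = 0 :=
    hL0 _ (fun j hj => bracket_lo n β γ hn y z j hj)
  have hR : secondClassBracket n β γ (secondClassBracket n β γ x y) z k
      = secondClassBracket n β γ (secondClassBracket n β γ x z) y k := by
    rw [expand n β γ x y z k, expand n β γ x z y k]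
    refine Finset.sum_congr rfl fun a _ => ?_
    rw [Finset.sum_comm]
    refine Finset.sum_congr rfl fun b _ => Finset.sum_congr rfl fun j _ => ?_
    rw [Gsym n β γ hn a b j k]
    ring
  simp only [Pi.sub_apply, hL, hR, sub_self]
end

section
/- The operators ρ satisfy the composition law ρ(1/A₂, B₂/A₂, D₂/A₂; ρ(1/A₁, B₁/A₁, D₁/A₁; β)) = ρ(1/(A₁A₂), (B₁A₂ + B₂D₁)/(A₁A₂), (D₁D₂)/(A₁A₂); β) for all nonzero A₁,A₂,D₁,D₂ ∈ ℂ and all parameter vectors β; in particular the triples (A,B,D) with AD ≠ 0 form a group acting on parameter space. -/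
open scoped BigOperators

/-- Nested-chain sums: `chainSum z m b t` is the sum over nondecreasing chains
`b ≤ i₁ ≤ … ≤ i_{m-1} ≤ t` (with `i₀ = b`, `i_m = t`) of `∏_j z_{i_j + 3 - i_{j-1}}`. -/
noncomputable def chainSum (z : ℕ → ℂ) : ℕ → ℕ → ℕ → ℂ
  | 0, _, _ => 0
  | 1, b, t => z (t + 3 - b)
  | m + 2, b, t => ∑ i ∈ Finset.Icc b t, z (t + 3 - i) * chainSum z (m + 1) b i

/-- The polynomials `ψ_t(y;z)` of the isomorphism criterion (Theorem 2 of
Gómez–Omirov):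
`ψ_t(y;z) = z_t - Σ_{k=3}^{t-1} (Σ_{m=1}^{k-1} C(k-1, k-1-m) yᵐ S_m(k,t)) ψ_k(y;z)`,
where `S_m(k,t) = chainSum z m (k+m) t` is the nested sum of depth `m-1`. -/
noncomputable def psiGO (y : ℂ) (z : ℕ → ℂ) : ℕ → ℂ := fun t =>
  z t - ∑ k ∈ (Finset.Ico 3 t).attach,
    (∑ m ∈ Finset.Icc 1 (k.1 - 1),
        ((k.1 - 1).choose ((k.1 - 1) - m) : ℂ) * y ^ m * chainSum z m (k.1 + m) t) *
      psiGO y z k.1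
termination_by t => t
decreasing_by exact (Finset.mem_Ico.mp k.2).2

/-- The parameter transformation `ρ(1/A, B/A, D/A; ·)` of second-class filiform Leibniz
algebras `L(β₃,…,βₙ,γ)` induced by the adapted-basis change with scalars `A, B, D`:
`β'_t = (1/A^{t-2})(D/A) ψ_t(B/A; β)` for `3 ≤ t ≤ n-1`,
`β'_n = (1/A^{n-2})(D/A)((B/A)γ + ψ_n(B/A; β))`, `γ' = (D²/Aⁿ)γ`.
A parameter vector is encoded as a pair `(β, γ)` with `β : ℕ → ℂ` supported on `[3,n]`. -/
noncomputable def rhoGO (n : ℕ) (A B D : ℂ) (p : (ℕ → ℂ) × ℂ) : (ℕ → ℂ) × ℂ :=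
  (fun t =>
      if 3 ≤ t ∧ t ≤ n - 1 then (1 / A ^ (t - 2)) * (D / A) * psiGO (B / A) p.1 t
      else if t = n then (1 / A ^ (n - 2)) * (D / A) * ((B / A) * p.2 + psiGO (B / A) p.1 n)
      else 0,
    D ^ 2 / A ^ n * p.2)

/-! ### Auxiliary machinery -/

open Polynomial Finset

/-- the inner coefficient sum appearing in `psiGO` -/
noncomputable def Ecoef (v : ℂ) (w : ℕ → ℂ) (k t : ℕ) : ℂ :=
  ∑ m ∈ Finset.Icc 1 (k - 1), ((k - 1).choose ((k - 1) - m) : ℂ) * v ^ m * chainSum w m (k + m) t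

theorem psiGO_eq (y : ℂ) (z : ℕ → ℂ) (t : ℕ) :
    psiGO y z t = z t - ∑ k ∈ Finset.Ico 3 t, Ecoef y z k t * psiGO y z k := by
  rw [psiGO]
  rw [← Finset.sum_attach (Finset.Ico 3 t) (fun k => Ecoef y z k t * psiGO y z k)]
  rfl

theorem psiGO_le_three (y : ℂ) (z : ℕ → ℂ) (t : ℕ) (ht : t ≤ 3) : psiGO y z t = z t := by
  rw [psiGO_eq, Finset.Ico_eq_empty (by omega)]
  simp

theorem chainSum_vanish (w : ℕ → ℂ) (m b t : ℕ) (hm : 2 ≤ m) (h : t < b) :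
    chainSum w m b t = 0 := by
  obtain ⟨j, rfl⟩ : ∃ j, m = j + 2 := ⟨m - 2, by omega⟩
  rw [chainSum, Finset.Icc_eq_empty (by omega)]
  simp

noncomputable def Pp (w : ℕ → ℂ) (N : ℕ) : Polynomial ℂ :=
  ∑ a ∈ range (N+1), C (w (a+3)) * X^a

theorem coeff_Pp (w : ℕ → ℂ) (N a : ℕ) :
    (Pp w N).coeff a = if a ≤ N then w (a+3) else 0 := by
  rw [Pp, finset_sum_coeff]
  simp only [coeff_C_mul, coeff_X_pow, mul_ite, mul_one, mul_zero]
  rw [Finset.sum_ite_eq (range (N+1)) a (fun b => w (b+3))]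
  simp [Nat.lt_succ_iff]

theorem L1poly (w : ℕ → ℂ) (N : ℕ) : ∀ m, 1 ≤ m → ∀ b t : ℕ, b ≤ t → t - b ≤ N →
    ((Pp w N) ^ m).coeff (t - b) = chainSum w m b t := by
  intro m
  induction m with
  | zero => omega
  | succ m ih =>
    match m, ih with
    | 0, _ =>
      intro _ b t hbt hN
      rw [pow_one, coeff_Pp, if_pos hN]
      have : t - b + 3 = t + 3 - b := by omega
      rw [this, chainSum]
    | j + 1, ih =>
      intro _ b t hbt hN
      have hm : 1 ≤ j + 1 := by omega
      rw [pow_succ, mul_comm, coeff_mul]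
      rw [Finset.Nat.sum_antidiagonal_eq_sum_range_succ_mk]
      rw [chainSum]
      dsimp only
      rw [Nat.succ_eq_add_one]
      refine Finset.sum_nbij' (i := fun k => t - k) (j := fun i => t - i) ?_ ?_ ?_ ?_ ?_
      · intro k hk; simp only [Finset.mem_range, Finset.mem_Icc] at hk ⊢; omega
      · intro i hi; simp only [Finset.mem_range, Finset.mem_Icc] at hi ⊢; omega
      · intro k hk; simp only [Finset.mem_range] at hk; omega
      · intro i hi; simp only [Finset.mem_Icc] at hi; omega
      · intro k hk
        simp only [Finset.mem_range] at hk
        rw [coeff_Pp, if_pos (by omega)]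
        have h3 : k + 3 = t + 3 - (t - k) := by omega
        have h4 : t - b - k = (t - k) - b := by omega
        rw [h3, h4, ih hm b (t - k) (by omega) (by omega)]

/-- congruence mod X^M -/
def md (M : ℕ) (f g : Polynomial ℂ) : Prop := (X : Polynomial ℂ)^M ∣ f - g

theorem md_symm {M f g} (h : md M f g) : md M g f := by
  rw [md] at h ⊢; simpa [neg_sub] using dvd_neg.mpr h

theorem md_trans {M f g h} (h1 : md M f g) (h2 : md M g h) : md M f h := by
  have := dvd_add h1 h2; simpa [md] using this

theorem md_mul_left {M f g} (p : Polynomial ℂ) (h : md M f g) : md M (p * f) (p * g) := by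
  rw [md] at h ⊢; rw [← mul_sub]; exact Dvd.dvd.mul_left h p

theorem md_add_left {M f g} (p : Polynomial ℂ) (h : md M f g) : md M (p + f) (p + g) := by
  rw [md] at h ⊢; simpa using h

theorem md_mul {M f g f' g'} (h1 : md M f f') (h2 : md M g g') : md M (f * g) (f' * g') := by
  rw [md] at h1 h2 ⊢
  have : f * g - f' * g' = f * (g - g') + (f - f') * g' := by ring
  rw [this]
  exact dvd_add (Dvd.dvd.mul_left h2 f) (Dvd.dvd.mul_right h1 g')

theorem md_up {M f g} (p : Polynomial ℂ) (hp : (X : Polynomial ℂ) ∣ p) (h : md M f g) :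
    md (M + 1) (p * f) (p * g) := by
  rw [md] at h ⊢
  rw [← mul_sub, pow_succ, mul_comm ((X:Polynomial ℂ)^M) X]
  exact mul_dvd_mul hp h

theorem md_cancel_X {M f g} (h : md (M + 1) (X * f) (X * g)) : md M f g := by
  rw [md, pow_succ, mul_comm ((X:Polynomial ℂ)^M) X] at h
  obtain ⟨q, hq⟩ := h
  rw [← mul_sub, mul_assoc] at hq
  exact ⟨q, mul_left_cancel₀ (X_ne_zero) hq⟩

theorem md_coeff {M f g} (h : md M f g) {t : ℕ} (ht : t < M) : f.coeff t = g.coeff t := by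
  obtain ⟨q, hq⟩ := h
  have : f.coeff t - g.coeff t = ((X:Polynomial ℂ)^M * q).coeff t := by
    rw [← hq, coeff_sub]
  rw [mul_comm, coeff_mul_X_pow'] at this
  rw [if_neg (by omega)] at this
  exact sub_eq_zero.mp this

theorem md_of_coeff {M : ℕ} {f g : Polynomial ℂ} (h : ∀ t < M, f.coeff t = g.coeff t) :
    md M f g := by
  rw [md, X_pow_dvd_iff]
  intro d hd; rw [coeff_sub, h d hd, sub_self]

theorem md_comp_right {M} (f : Polynomial ℂ) {h h' : Polynomial ℂ} (hc : md M h h') :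
    md M (f.comp h) (f.comp h') := by
  rw [md] at hc ⊢
  have key : h - h' ∣ f.comp h - f.comp h' := by
    rw [comp_eq_sum_left, comp_eq_sum_left, Polynomial.sum, Polynomial.sum,
      ← Finset.sum_sub_distrib]
    apply Finset.dvd_sum
    intro d _
    rw [← mul_sub]
    exact Dvd.dvd.mul_left (sub_dvd_pow_sub_pow h h' d) _
  exact dvd_trans hc key

theorem coeff_pow_eq_zero {h : Polynomial ℂ} (hh : (X : Polynomial ℂ) ∣ h) {d t : ℕ}
    (htd : t < d) : (h^d).coeff t = 0 := by
  have : (X:Polynomial ℂ)^d ∣ h^d := pow_dvd_pow_of_dvd hh d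
  obtain ⟨q, hq⟩ := this
  rw [hq, mul_comm, coeff_mul_X_pow', if_neg (by omega)]

theorem coeff_comp_sum (e h : Polynomial ℂ) (hh : (X : Polynomial ℂ) ∣ h) (t : ℕ) :
    (e.comp h).coeff t = ∑ d ∈ range (t+1), e.coeff d * (h^d).coeff t := by
  rw [comp_eq_sum_left, Polynomial.sum]
  rw [finset_sum_coeff]
  simp only [coeff_C_mul]
  rw [Finset.sum_subset (Finset.subset_union_left (s₁ := e.support) (s₂ := range (t+1)))
      (fun d _ hd => by rw [notMem_support_iff.mp hd, zero_mul])]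
  rw [← Finset.sum_subset (Finset.subset_union_right (s₁ := e.support) (s₂ := range (t+1)))
      (fun d _ hd => by
        rw [Finset.mem_range, not_lt] at hd
        rw [coeff_pow_eq_zero hh (by omega), mul_zero])]

theorem coeff_one_comp_pow (r : Polynomial ℂ) (n : ℕ) :
    ((X * (1 + X * r) : Polynomial ℂ)^n).coeff n = 1 := by
  rw [mul_pow, mul_comm, coeff_mul_X_pow', if_pos le_rfl, Nat.sub_self]
  rw [coeff_zero_eq_eval_zero]
  simp

theorem md_comp_cancel {M : ℕ} {f g : Polynomial ℂ} (r : Polynomial ℂ)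
    (hc : md M (f.comp (X * (1 + X * r))) (g.comp (X * (1 + X * r)))) :
    ∀ t, t < M → f.coeff t = g.coeff t := by
  set h : Polynomial ℂ := X * (1 + X * r) with hdef
  have hh : (X : Polynomial ℂ) ∣ h := Dvd.intro _ rfl
  have he : ∀ t < M, ((f - g).comp h).coeff t = 0 := by
    intro t ht
    have : md M ((f-g).comp h) 0 := by
      rw [sub_comp, md, sub_zero]
      exact hc
    rw [md_coeff this ht, coeff_zero]
  intro t
  induction t using Nat.strong_induction_on with
  | _ t ih =>
    intro ht
    have h0 := he t ht
    rw [coeff_comp_sum _ _ hh] at h0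
    rw [Finset.sum_range_succ] at h0
    rw [coeff_one_comp_pow, mul_one] at h0
    rw [Finset.sum_eq_zero (fun d hd => by
      rw [Finset.mem_range] at hd
      rw [coeff_sub, ih d (by omega) (by omega), sub_self, zero_mul])] at h0
    rw [zero_add, coeff_sub, sub_eq_zero] at h0
    exact h0

noncomputable def Hp (v : ℂ) (w : ℕ → ℂ) (N : ℕ) : Polynomial ℂ :=
  X * (1 + C v * X * Pp w N)

theorem coeff_X_Hpow (v : ℂ) (w : ℕ → ℂ) (N : ℕ) (k t : ℕ) (hk : 3 ≤ k) (htN : t ≤ N + 3) :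
    (X * (Hp v w N) ^ (k - 1)).coeff t =
      if k = t then 1 else if k < t then Ecoef v w k t else 0 := by
  have hrw : X * (Hp v w N) ^ (k-1) =
      (C v * X * Pp w N + 1)^(k-1) * X^((k-1)+1) := by
    rw [Hp, mul_pow, add_comm]; ring
  rw [hrw, coeff_mul_X_pow']
  by_cases hkt : k - 1 + 1 ≤ t
  · rw [if_pos hkt]
    have hk1 : k - 1 + 1 = k := by omega
    rw [hk1] at hkt ⊢
    set s := t - k with hs
    rw [add_pow, finset_sum_coeff]
    have hterm : ∀ m, ((C v * X * Pp w N)^m * 1^((k-1)-m) * ((k-1).choose m : Polynomial ℂ)).coeff s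
        = ((k-1).choose m : ℂ) * v^m * (if m ≤ s then ((Pp w N)^m).coeff (s - m) else 0) := by
      intro m
      rw [one_pow, mul_one, ← Polynomial.C_eq_natCast, mul_comm, coeff_C_mul]
      have : (C v * X * Pp w N)^m = C (v^m) * ((Pp w N)^m * X^m) := by
        rw [mul_pow, mul_pow, ← C_pow]; ring
      rw [this, coeff_C_mul, coeff_mul_X_pow']
      ring
    rw [Finset.sum_congr rfl (fun m _ => hterm m)]
    by_cases hkeq : k = t
    · rw [if_pos hkeq]
      have hs0 : s = 0 := by omega
      rw [Finset.sum_eq_single 0]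
      · simp [hs0]
      · intro m _ hm
        rw [if_neg (by omega), mul_zero]
      · intro h; simp at h
    · rw [if_neg hkeq, if_pos (by omega)]
      have hsplit : range ((k-1)+1) = insert 0 (Finset.Icc 1 (k-1)) := by
        ext m; simp [Finset.mem_range, Finset.mem_Icc]; omega
      rw [hsplit, Finset.sum_insert (by simp)]
      have h0 : ((k-1).choose 0 : ℂ) * v^0 * (if 0 ≤ s then ((Pp w N)^0).coeff (s - 0) else 0) = 0 := by
        rw [if_pos (Nat.zero_le s), Nat.sub_zero, pow_zero (Pp w N), coeff_one, if_neg (by omega)]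
        ring
      rw [h0, zero_add, Ecoef]
      apply Finset.sum_congr rfl
      intro m hm
      rw [Finset.mem_Icc] at hm
      rw [Nat.choose_symm (by omega : m ≤ k - 1)]
      by_cases hms : m ≤ s
      · rw [if_pos hms]
        have : s - m = t - (k + m) := by omega
        rw [this, L1poly w N m (by omega) (k+m) t (by omega) (by omega)]
      · rw [if_neg hms]
        have hm2 : 2 ≤ m := by omega
        rw [chainSum_vanish w m (k+m) t hm2 (by omega)]
  · rw [if_neg hkt, if_neg (by omega), if_neg (by omega)]

theorem Lc (W w : ℕ → ℂ) (v : ℂ) (N t : ℕ) (ht : 3 ≤ t) (htN : t ≤ N + 3) :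
    (X * ((X^2 * Pp W N).comp (Hp v w N))).coeff t =
      W t + ∑ k ∈ Finset.Ico 3 t, Ecoef v w k t * W k := by
  have hexp : X * ((X^2 * Pp W N).comp (Hp v w N)) =
      ∑ a ∈ range (N+1), C (W (a+3)) * (X * (Hp v w N)^((a+3)-1)) := by
    rw [mul_comp, X_pow_comp, Pp]
    have hsum : (∑ a ∈ range (N+1), C (W (a+3)) * X^a).comp (Hp v w N)
        = ∑ a ∈ range (N+1), C (W (a+3)) * (Hp v w N)^a := by
      rw [← coe_compRingHom_apply, map_sum]
      apply Finset.sum_congr rfl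
      intro a _
      rw [coe_compRingHom_apply, mul_comp, C_comp, X_pow_comp]
    rw [hsum]
    rw [Finset.mul_sum, Finset.mul_sum]
    apply Finset.sum_congr rfl
    intro a _
    rw [show (a+3)-1 = a + 2 from rfl]
    ring
  rw [hexp, finset_sum_coeff]
  have hterm : ∀ a, (C (W (a+3)) * (X * (Hp v w N)^((a+3)-1))).coeff t
      = W (a+3) * (if a + 3 = t then 1 else if a + 3 < t then Ecoef v w (a+3) t else 0) := by
    intro a
    rw [coeff_C_mul, coeff_X_Hpow v w N (a+3) t (by omega) htN]
  rw [Finset.sum_congr rfl (fun a _ => hterm a)]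
  rw [← Finset.sum_subset (Finset.range_subset_range.mpr (by omega : t - 2 ≤ N + 1))
    (fun a _ ha => by
      rw [Finset.mem_range, not_lt] at ha
      rw [if_neg (by omega), if_neg (by omega), mul_zero])]
  rw [show t - 2 = (t - 3) + 1 from by omega, Finset.sum_range_succ]
  rw [if_pos (by omega : (t-3) + 3 = t), mul_one, show (t-3) + 3 = t from by omega]
  rw [Finset.sum_Ico_eq_sum_range]
  rw [add_comm (W t)]
  congr 1
  apply Finset.sum_congr rfl
  intro a ha
  rw [Finset.mem_range] at ha
  rw [if_neg (by omega), if_pos (by omega), show 3 + a = a + 3 from by omega]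
  ring

/-- The defining relation in polynomial form. -/
theorem L2_s5 (y : ℂ) (z : ℕ → ℂ) (N : ℕ) :
    md (N+4) (X * ((X^2 * Pp (psiGO y z) N).comp (Hp y z N))) (X^3 * Pp z N) := by
  apply md_of_coeff
  intro t ht
  by_cases h3 : 3 ≤ t
  · rw [Lc (psiGO y z) z y N t h3 (by omega)]
    have : (X^3 * Pp z N).coeff t = z t := by
      rw [mul_comm, coeff_mul_X_pow', if_pos (by omega), coeff_Pp, if_pos (by omega),
        show t - 3 + 3 = t from by omega]
    rw [this, psiGO_eq y z t]
    ring
  · have hlow : X * ((X^2 * Pp (psiGO y z) N).comp (Hp y z N)) =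
        ((1 + C y * X * Pp z N)^2 * ((Pp (psiGO y z) N).comp (Hp y z N))) * X^3 := by
      rw [mul_comp, X_pow_comp, Hp]
      ring
    rw [hlow, coeff_mul_X_pow', if_neg (by omega)]
    rw [mul_comm ((X:Polynomial ℂ)^3), coeff_mul_X_pow', if_neg (by omega)]

/-- the key identity: `ψ_y z` satisfies the defining relation of `ψ_u` with
answer `ψ_{y+u} z`. -/
theorem star (y u : ℂ) (z : ℕ → ℂ) (t : ℕ) (ht : 3 ≤ t) :
    psiGO y z t = psiGO (y+u) z t
      + ∑ k ∈ Finset.Ico 3 t, Ecoef u (psiGO y z) k t * psiGO (y+u) z k := by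
  set N := t with hN
  set φ := psiGO y z with hφ
  set Ψ := psiGO (y+u) z with hΨ
  set h := Hp y z N with hh
  have hXh : (X : Polynomial ℂ) ∣ h := Dvd.intro _ rfl
  have L2a := L2_s5 y z N
  have L2b := L2_s5 (y+u) z N
  rw [show (X:Polynomial ℂ)^3 * Pp z N = X * (X^2 * Pp z N) from by ring] at L2a L2b
  have E1 : md (N+3) (h^2 * ((Pp φ N).comp h)) (X^2 * Pp z N) := by
    apply md_cancel_X
    have : X * (h^2 * ((Pp φ N).comp h)) = X * ((X^2 * Pp φ N).comp h) := by
      rw [mul_comp, X_pow_comp]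
    rw [this]
    exact L2a
  have E2 : md (N+3) ((Hp (y+u) z N)^2 * ((Pp Ψ N).comp (Hp (y+u) z N))) (X^2 * Pp z N) := by
    apply md_cancel_X
    have : X * ((Hp (y+u) z N)^2 * ((Pp Ψ N).comp (Hp (y+u) z N)))
        = X * ((X^2 * Pp Ψ N).comp (Hp (y+u) z N)) := by
      rw [mul_comp, X_pow_comp]
    rw [this]
    exact L2b
  -- kp.comp h ≡ h₃
  set kp := Hp u φ N with hkp
  have hkh : kp.comp h = h + C u * (h^2 * ((Pp φ N).comp h)) := by
    rw [hkp, Hp, mul_comp, add_comp, one_comp, mul_comp, mul_comp, C_comp, X_comp]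
    ring
  have hh3 : Hp (y+u) z N = h + C u * (X^2 * Pp z N) := by
    rw [hh, Hp, Hp, C_add]
    ring
  have E3 : md (N+3) (kp.comp h) (Hp (y+u) z N) := by
    rw [hkh, hh3]
    exact md_add_left h (md_mul_left (C u) E1)
  have E4 : md (N+3) ((Pp Ψ N).comp (kp.comp h)) ((Pp Ψ N).comp (Hp (y+u) z N)) :=
    md_comp_right _ E3
  have E5 : md (N+3) ((kp.comp h)^2) ((Hp (y+u) z N)^2) := by
    rw [pow_two, pow_two]; exact md_mul E3 E3
  have E8 : md (N+3) ((kp.comp h)^2 * ((Pp Ψ N).comp (kp.comp h))) (X^2 * Pp z N) :=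
    md_trans (md_mul E5 E4) E2
  have E9 : md (N+3) (h^2 * ((Pp φ N).comp h)) ((kp.comp h)^2 * ((Pp Ψ N).comp (kp.comp h))) :=
    md_trans E1 (md_symm E8)
  have E10 : md (N+4) ((X^3 * Pp φ N).comp h) ((X * ((X^2 * Pp Ψ N).comp kp)).comp h) := by
    have lhs_eq : (X^3 * Pp φ N).comp h = h * (h^2 * ((Pp φ N).comp h)) := by
      rw [mul_comp, X_pow_comp]
      ring
    have rhs_eq : (X * ((X^2 * Pp Ψ N).comp kp)).comp h
        = h * ((kp.comp h)^2 * ((Pp Ψ N).comp (kp.comp h))) := by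
      rw [mul_comp, X_comp, comp_assoc, mul_comp, X_pow_comp]
    rw [lhs_eq, rhs_eq]
    exact md_up h hXh E9
  have hform : h = X * (1 + X * (C y * Pp z N)) := by
    rw [hh, Hp]; ring
  rw [hform] at E10
  have hcoeff := md_comp_cancel (C y * Pp z N) E10 t (by omega)
  have hL : (X^3 * Pp φ N).coeff t = φ t := by
    rw [mul_comm, coeff_mul_X_pow', if_pos (by omega), coeff_Pp, if_pos (by omega),
      show t - 3 + 3 = t from by omega]
  have hR : (X * ((X^2 * Pp Ψ N).comp kp)).coeff t
      = Ψ t + ∑ k ∈ Finset.Ico 3 t, Ecoef u φ k t * Ψ k := by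
    rw [hkp]
    exact Lc Ψ φ u N t ht (by omega)
  rw [hL, hR] at hcoeff
  exact hcoeff

/-- The flow property: `ψ_u ∘ ψ_y = ψ_{y+u}`. -/
theorem psiGO_flow (y u : ℂ) (z : ℕ → ℂ) (t : ℕ) :
    psiGO u (psiGO y z) t = psiGO (y+u) z t := by
  induction t using Nat.strong_induction_on with
  | _ t ih =>
    by_cases ht : 3 ≤ t
    · rw [psiGO_eq u (psiGO y z) t]
      have hs : ∑ k ∈ Finset.Ico 3 t, Ecoef u (psiGO y z) k t * psiGO u (psiGO y z) k
          = ∑ k ∈ Finset.Ico 3 t, Ecoef u (psiGO y z) k t * psiGO (y+u) z k := by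
        apply Finset.sum_congr rfl
        intro k hk
        rw [Finset.mem_Ico] at hk
        rw [ih k hk.2]
      rw [hs, star y u z t ht]
      ring
    · rw [psiGO_le_three u (psiGO y z) t (by omega),
        psiGO_le_three y z t (by omega), psiGO_le_three (y+u) z t (by omega)]

/-- Scaling of chain sums. -/
theorem chainSum_scale (c q : ℂ) (z : ℕ → ℂ) : ∀ m, 1 ≤ m → ∀ b t : ℕ, b ≤ t + 2 →
    chainSum (fun s => c * q^(s-1) * z s) m b t = c^m * q^(t + 2*m - b) * chainSum z m b t := by
  intro m
  induction m with
  | zero => omega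
  | succ m ih =>
    match m, ih with
    | 0, _ =>
      intro _ b t hb
      rw [chainSum, chainSum]
      rw [show t + 3 - b - 1 = t + 2*1 - b from by omega]
      ring
    | j + 1, ih =>
      intro _ b t hb
      rw [chainSum, chainSum, Finset.mul_sum]
      apply Finset.sum_congr rfl
      intro i hi
      rw [Finset.mem_Icc] at hi
      rw [ih (by omega) b i (by omega)]
      have hq : q^(t + 3 - i - 1) * q^(i + 2*(j+1) - b) = q^(t + 2*(j+1+1) - b) := by
        rw [← pow_add]
        congr 1
        omega
      calc c * q^(t+3-i-1) * z (t+3-i) * (c^(j+1) * q^(i+2*(j+1)-b) * chainSum z (j+1) b i)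
          = c * c^(j+1) * (q^(t+3-i-1) * q^(i+2*(j+1)-b)) * (z (t+3-i) * chainSum z (j+1) b i) := by
            ring
        _ = c^(j+1+1) * q^(t+2*(j+1+1)-b) * (z (t+3-i) * chainSum z (j+1) b i) := by
            rw [hq, ← pow_succ']

/-- Scaling of ψ. -/
theorem psiGO_scale (y c q : ℂ) (z : ℕ → ℂ) (t : ℕ) :
    psiGO y (fun s => c * q^(s-1) * z s) t = c * q^(t-1) * psiGO (y*(c*q)) z t := by
  induction t using Nat.strong_induction_on with
  | _ t ih =>
    rw [psiGO_eq, psiGO_eq]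
    have hsum : ∑ k ∈ Finset.Ico 3 t, Ecoef y (fun s => c * q^(s-1) * z s) k t
          * psiGO y (fun s => c * q^(s-1) * z s) k
        = ∑ k ∈ Finset.Ico 3 t, c * q^(t-1) * (Ecoef (y*(c*q)) z k t * psiGO (y*(c*q)) z k) := by
      apply Finset.sum_congr rfl
      intro k hk
      rw [Finset.mem_Ico] at hk
      rw [ih k hk.2]
      rw [Ecoef, Ecoef, Finset.sum_mul, Finset.sum_mul, Finset.mul_sum]
      apply Finset.sum_congr rfl
      intro m hm
      rw [Finset.mem_Icc] at hm
      by_cases hbt : k + m ≤ t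
      · rw [chainSum_scale c q z m (by omega) (k+m) t (by omega)]
        have hq : q^(t + 2*m - (k+m)) * q^(k-1) = q^(t-1) * q^m := by
          rw [← pow_add, ← pow_add]
          congr 1
          omega
        rw [mul_pow y (c*q) m, mul_pow c q m]
        calc ((k-1).choose (k-1-m) : ℂ) * y^m * (c^m * q^(t+2*m-(k+m)) * chainSum z m (k+m) t)
              * (c * q^(k-1) * psiGO (y*(c*q)) z k)
            = ((k-1).choose (k-1-m) : ℂ) * y^m * c^m * c * chainSum z m (k+m) t
              * psiGO (y*(c*q)) z k * (q^(t+2*m-(k+m)) * q^(k-1)) := by ring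
          _ = ((k-1).choose (k-1-m) : ℂ) * y^m * c^m * c * chainSum z m (k+m) t
              * psiGO (y*(c*q)) z k * (q^(t-1) * q^m) := by rw [hq]
          _ = c * q^(t-1) * (((k-1).choose (k-1-m) : ℂ) * (y^m * (c^m * q^m))
              * chainSum z m (k+m) t * psiGO (y*(c*q)) z k) := by ring
      · have hm2 : 2 ≤ m := by
          rcases Nat.eq_or_lt_of_le hm.1 with h | h
          · omega
          · omega
        rw [chainSum_vanish _ m (k+m) t hm2 (by omega),
          chainSum_vanish z m (k+m) t hm2 (by omega)]
        ring
    rw [hsum, ← Finset.mul_sum]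
    ring

/-- chainSum only depends on `z` on the window `[3, t+3-b]`. -/
theorem chainSum_congr (z z' : ℕ → ℂ) : ∀ m, 1 ≤ m → ∀ b t : ℕ, b ≤ t →
    (∀ j, 3 ≤ j → j ≤ t + 3 - b → z j = z' j) →
    chainSum z m b t = chainSum z' m b t := by
  intro m
  induction m with
  | zero => omega
  | succ m ih =>
    match m, ih with
    | 0, _ =>
      intro _ b t hb hcong
      rw [chainSum, chainSum]
      exact hcong _ (by omega) (by omega)
    | j + 1, ih =>
      intro _ b t hb hcong
      rw [chainSum, chainSum]
      apply Finset.sum_congr rfl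
      intro i hi
      rw [Finset.mem_Icc] at hi
      rw [hcong (t+3-i) (by omega) (by omega)]
      rw [ih (by omega) b i hi.1 (fun j h3 hj => hcong j h3 (by omega))]

/-- ψ_t only depends on `z` on `[3, t]`, and depends on `z t` additively. -/
theorem psiGO_congr (y : ℂ) (z z' : ℕ → ℂ) (t : ℕ)
    (hcong : ∀ j, 3 ≤ j → j < t → z j = z' j) :
    psiGO y z t - z t = psiGO y z' t - z' t := by
  induction t using Nat.strong_induction_on with
  | _ t ih =>
    rw [psiGO_eq, psiGO_eq]
    have hsum : ∑ k ∈ Finset.Ico 3 t, Ecoef y z k t * psiGO y z k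
        = ∑ k ∈ Finset.Ico 3 t, Ecoef y z' k t * psiGO y z' k := by
      apply Finset.sum_congr rfl
      intro k hk
      rw [Finset.mem_Ico] at hk
      have hpsik : psiGO y z k = psiGO y z' k := by
        have := ih k hk.2 (fun j h3 hj => hcong j h3 (by omega))
        have hzk : z k = z' k := hcong k hk.1 hk.2
        rw [hzk] at this
        linear_combination this
      rw [hpsik]
      congr 1
      rw [Ecoef, Ecoef]
      apply Finset.sum_congr rfl
      intro m hm
      rw [Finset.mem_Icc] at hm
      by_cases hbt : k + m ≤ t
      · rw [chainSum_congr z z' m (by omega) (k+m) t (by omega)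
          (fun j h3 hj => hcong j h3 (by omega))]
      · have hm2 : 2 ≤ m := by omega
        rw [chainSum_vanish z m (k+m) t hm2 (by omega),
          chainSum_vanish z' m (k+m) t hm2 (by omega)]
    rw [hsum]
    ring

theorem rhoGO_fst_mid (n : ℕ) (A B D : ℂ) (p : (ℕ → ℂ) × ℂ) (t : ℕ)
    (h : 3 ≤ t ∧ t ≤ n - 1) :
    (rhoGO n A B D p).1 t = (1 / A ^ (t - 2)) * (D / A) * psiGO (B / A) p.1 t := by
  rw [rhoGO]; exact if_pos h

theorem rhoGO_fst_top (n : ℕ) (A B D : ℂ) (p : (ℕ → ℂ) × ℂ) (t : ℕ)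
    (h1 : ¬(3 ≤ t ∧ t ≤ n - 1)) (h2 : t = n) :
    (rhoGO n A B D p).1 t
      = (1 / A ^ (n - 2)) * (D / A) * ((B / A) * p.2 + psiGO (B / A) p.1 n) := by
  rw [rhoGO]
  show (if 3 ≤ t ∧ t ≤ n - 1 then _ else if t = n then _ else _) = _
  rw [if_neg h1, if_pos h2]

theorem rhoGO_fst_out (n : ℕ) (A B D : ℂ) (p : (ℕ → ℂ) × ℂ) (t : ℕ)
    (h1 : ¬(3 ≤ t ∧ t ≤ n - 1)) (h2 : ¬ t = n) :
    (rhoGO n A B D p).1 t = 0 := by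
  rw [rhoGO]
  show (if 3 ≤ t ∧ t ≤ n - 1 then _ else if t = n then _ else _) = _
  rw [if_neg h1, if_neg h2]

theorem rhoGO_snd (n : ℕ) (A B D : ℂ) (p : (ℕ → ℂ) × ℂ) :
    (rhoGO n A B D p).2 = D ^ 2 / A ^ n * p.2 := rfl

/-- Composition law for the operators `ρ` (final theorem). -/
theorem rhoGO_comp (n : ℕ) (hn : 4 ≤ n) (A₁ B₁ D₁ A₂ B₂ D₂ : ℂ)
    (hA₁ : A₁ ≠ 0) (hA₂ : A₂ ≠ 0) (hD₁ : D₁ ≠ 0) (hD₂ : D₂ ≠ 0)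
    (p : (ℕ → ℂ) × ℂ) :
    rhoGO n A₂ B₂ D₂ (rhoGO n A₁ B₁ D₁ p) =
      rhoGO n (A₁ * A₂) (B₁ * A₂ + B₂ * D₁) (D₁ * D₂) p := by
  have hA12 : A₁ * A₂ ≠ 0 := mul_ne_zero hA₁ hA₂
  set β' := (rhoGO n A₁ B₁ D₁ p).1 with hβ'
  set β'' : ℕ → ℂ := fun s => D₁ * (1/A₁)^(s-1) * psiGO (B₁/A₁) p.1 s with hβ''
  set Ypar : ℂ := (B₁ * A₂ + B₂ * D₁) / (A₁ * A₂) with hYpar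
  have hYeq : B₁/A₁ + (B₂/A₂) * (D₁ * (1/A₁)) = Ypar := by
    rw [hYpar]
    field_simp
  have hββ : ∀ j, 3 ≤ j → j ≤ n - 1 → β' j = β'' j := by
    intro j h3 hj
    rw [hβ', rhoGO]
    simp only
    rw [if_pos ⟨h3, hj⟩, hβ'']
    have e : (1 / A₁^(j-2)) * (D₁/A₁) = D₁ * (1/A₁)^(j-1) :=
      calc (1/A₁^(j-2))*(D₁/A₁) = D₁ * (1/(A₁^(j-2)*A₁)) := by ring
        _ = D₁ * (1/A₁^(j-1)) := by rw [← pow_succ, show j-2+1 = j-1 from by omega]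
        _ = D₁ * (1/A₁)^(j-1) := by rw [one_div (A₁^(j-1)), one_div A₁, inv_pow]
    rw [e]
  have hpsi : ∀ t, 3 ≤ t → t ≤ n →
      psiGO (B₂/A₂) β' t
        = β' t + (D₁ * (1/A₁)^(t-1) * psiGO Ypar p.1 t - β'' t) := by
    intro t h3 htn
    have hc := psiGO_congr (B₂/A₂) β' β'' t (fun j hj3 hjt => hββ j hj3 (by omega))
    have hs : psiGO (B₂/A₂) β'' t = D₁ * (1/A₁)^(t-1) * psiGO Ypar p.1 t := by
      rw [hβ'']
      rw [psiGO_scale (B₂/A₂) D₁ (1/A₁) (psiGO (B₁/A₁) p.1) t]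
      rw [psiGO_flow (B₁/A₁) ((B₂/A₂)*(D₁*(1/A₁))) p.1 t]
      rw [hYeq]
    rw [hs] at hc
    linear_combination hc
  have hsnd : (rhoGO n A₁ B₁ D₁ p).2 = D₁ ^ 2 / A₁ ^ n * p.2 := rfl
  ext t
  · -- first components
    by_cases h1 : 3 ≤ t ∧ t ≤ n - 1
    · rw [rhoGO_fst_mid n A₂ B₂ D₂ _ t h1, rhoGO_fst_mid n (A₁*A₂) (B₁*A₂+B₂*D₁) (D₁*D₂) p t h1]
      rw [← hβ', hpsi t h1.1 (by omega), hββ t h1.1 h1.2, hβ'']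
      simp only
      rw [show t - 1 = (t-2)+1 from by omega]
      have hexp : (1/A₂^(t-2)) * (D₂/A₂) * (D₁ * (1/A₁)^((t-2)+1) * psiGO Ypar p.1 t)
          = 1/(A₁*A₂)^(t-2) * (D₁*D₂/(A₁*A₂)) * psiGO Ypar p.1 t := by
        rw [mul_pow A₁ A₂ (t-2), pow_succ]
        field_simp
        ring_nf
        rw [← mul_pow, mul_inv_cancel₀ hA₁, one_pow, one_mul]
      rw [← hexp, hYpar]
      ring
    · by_cases h2 : t = n
      · rw [rhoGO_fst_top n A₂ B₂ D₂ _ t h1 h2, rhoGO_fst_top n (A₁*A₂) (B₁*A₂+B₂*D₁) (D₁*D₂) p t h1 h2]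
        rw [hsnd, ← hβ', hpsi n (by omega) le_rfl]
        have hβ'n : β' n = (1 / A₁ ^ (n - 2)) * (D₁ / A₁) * ((B₁ / A₁) * p.2 + psiGO (B₁/A₁) p.1 n) := by
          rw [hβ']
          exact rhoGO_fst_top n A₁ B₁ D₁ p n (by omega) rfl
        rw [hβ'n, hβ'']
        simp only
        -- now pure scalar identity
        set P := psiGO Ypar p.1 n
        set Q := psiGO (B₁/A₁) p.1 n
        set γ := p.2
        clear_value P Q γ
        clear hpsi hββ hYeq hβ'n hsnd
        obtain ⟨e, he⟩ : ∃ e, n = e + 2 := ⟨n - 2, by omega⟩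
        rw [he]
        rw [show e + 2 - 2 = e from by omega, show e + 2 - 1 = e + 1 from by omega]
        have hA₁e : A₁^e ≠ 0 := pow_ne_zero e hA₁
        have hA₂e : A₂^e ≠ 0 := pow_ne_zero e hA₂
        rw [mul_pow A₁ A₂ e]
        simp only [one_div, inv_pow, pow_succ]
        field_simp
        have hW : (A₁:ℂ)^5 * A₁^(e*3) * A₁⁻¹^5 * A₁⁻¹^(e*3) * (A₂^2 * A₂^e * A₂⁻¹^2 * A₂⁻¹^e) = 1 := by
          have h' : (A₁:ℂ)^5 * A₁^(e*3) * A₁⁻¹^5 * A₁⁻¹^(e*3) * (A₂^2 * A₂^e * A₂⁻¹^2 * A₂⁻¹^e)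
              = (A₁*A₁⁻¹)^5 * (A₁*A₁⁻¹)^(e*3) * ((A₂*A₂⁻¹)^2 * (A₂*A₂⁻¹)^e) := by ring
          rw [h', mul_inv_cancel₀ hA₁, mul_inv_cancel₀ hA₂]
          simp
        linear_combination (0 : ℂ) * hW
      · rw [rhoGO_fst_out n A₂ B₂ D₂ _ t h1 h2, rhoGO_fst_out n (A₁*A₂) (B₁*A₂+B₂*D₁) (D₁*D₂) p t h1 h2]
  · -- second components
    rw [rhoGO_snd, rhoGO_snd, rhoGO_snd]
    rw [mul_pow D₁ D₂, mul_pow A₁ A₂]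
    ring
end

section
/- For 5-dimensional second-class filiform Leibniz algebras, the transformation rules are β₃' = (D/A²)β₃, β₄' = (D/A³)((B/A)γ + β₄ - 2(B/A)β₃²), γ' = (D²/A⁴)γ, for A, B, D ∈ ℂ with AD ≠ 0. Under these rules, the rational function γ/β₃² is invariant: if β₃ ≠ 0 then β₃' ≠ 0 and γ'/β₃'² = γ/β₃². -/
/-- For 5-dimensional second-class filiform Leibniz algebras, with transformation rules
`β₃' = (D/A²)β₃`, `β₄' = (D/A³)((B/A)γ + β₄ - 2(B/A)β₃²)`, `γ' = (D²/A⁴)γ` (`AD ≠ 0`),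
the rational function `γ/β₃²` is invariant: if `β₃ ≠ 0` then `β₃' ≠ 0` and
`γ'/β₃'² = γ/β₃²`. -/
theorem dim5_invariant (A B D β₃ β₄ γ β₃' β₄' γ' : ℂ) (hAD : A * D ≠ 0)
    (h3 : β₃' = D / A ^ 2 * β₃)
    (h4 : β₄' = D / A ^ 3 * (B / A * γ + β₄ - 2 * (B / A) * β₃ ^ 2))
    (hg : γ' = D ^ 2 / A ^ 4 * γ)
    (hβ₃ : β₃ ≠ 0) :
    β₃' ≠ 0 ∧ γ' / β₃' ^ 2 = γ / β₃ ^ 2 := by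
  have hA : A ≠ 0 := fun h => hAD (by simp [h])
  have hD : D ≠ 0 := fun h => hAD (by simp [h])
  constructor
  · rw [h3]
    exact mul_ne_zero (div_ne_zero hD (pow_ne_zero _ hA)) hβ₃
  · rw [h3, hg]
    field_simp
end

section
/- For 6-dimensional second-class filiform Leibniz algebras with transformation rules β₃'=(D/A²)β₃, β₄'=(D/A³)(β₄-2(B/A)β₃²), β₅'=(D/A⁴)((B/A)γ+β₅-5(B/A)β₃β₄+5(B/A)²β₃³), γ'=(D²/A⁵)γ (A,B,D ∈ ℂ, AD≠0), the rational function (2β₃β₄γ + 4β₃³β₅ - 5β₃²β₄²)/γ² is invariant: if γ ≠ 0 then γ' ≠ 0 and (2β₃'β₄'γ' + 4β₃'³β₅' - 5β₃'²β₄'²)/γ'² = (2β₃β₄γ + 4β₃³β₅ - 5β₃²β₄²)/γ². -/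
/-- For 6-dimensional second-class filiform Leibniz algebras with transformation rules
`β₃'=(D/A²)β₃`, `β₄'=(D/A³)(β₄-2(B/A)β₃²)`,
`β₅'=(D/A⁴)((B/A)γ+β₅-5(B/A)β₃β₄+5(B/A)²β₃³)`, `γ'=(D²/A⁵)γ` (`AD ≠ 0`),
the rational function `(2β₃β₄γ + 4β₃³β₅ - 5β₃²β₄²)/γ²` is invariant: if `γ ≠ 0` then
`γ' ≠ 0` and the values agree. -/
theorem dim6_invariant (A B D β₃ β₄ β₅ γ β₃' β₄' β₅' γ' : ℂ) (hAD : A * D ≠ 0)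
    (h3 : β₃' = D / A ^ 2 * β₃)
    (h4 : β₄' = D / A ^ 3 * (β₄ - 2 * (B / A) * β₃ ^ 2))
    (h5 : β₅' = D / A ^ 4 *
      (B / A * γ + β₅ - 5 * (B / A) * β₃ * β₄ + 5 * (B / A) ^ 2 * β₃ ^ 3))
    (hg : γ' = D ^ 2 / A ^ 5 * γ)
    (hγ : γ ≠ 0) :
    γ' ≠ 0 ∧
      (2 * β₃' * β₄' * γ' + 4 * β₃' ^ 3 * β₅' - 5 * β₃' ^ 2 * β₄' ^ 2) / γ' ^ 2 =
        (2 * β₃ * β₄ * γ + 4 * β₃ ^ 3 * β₅ - 5 * β₃ ^ 2 * β₄ ^ 2) / γ ^ 2 := by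
  have hA : A ≠ 0 := fun h => hAD (by simp [h])
  have hD : D ≠ 0 := fun h => hAD (by simp [h])
  have hγ' : γ' ≠ 0 := by
    rw [hg]; field_simp
    exact div_ne_zero (mul_ne_zero (pow_ne_zero _ hD) hγ) (pow_ne_zero _ hA)
  refine ⟨hγ', ?_⟩
  have key : 2 * β₃' * β₄' * γ' + 4 * β₃' ^ 3 * β₅' - 5 * β₃' ^ 2 * β₄' ^ 2 =
      D ^ 4 / A ^ 10 * (2 * β₃ * β₄ * γ + 4 * β₃ ^ 3 * β₅ - 5 * β₃ ^ 2 * β₄ ^ 2) := by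
    subst h3 h4 h5 hg
    set E := B / A with hE
    ring
  have hg2 : γ' ^ 2 = D ^ 4 / A ^ 10 * γ ^ 2 := by
    subst hg; field_simp
  have hc : D ^ 4 / A ^ 10 ≠ 0 := by
    apply div_ne_zero (pow_ne_zero _ hD) (pow_ne_zero _ hA)
  rw [key, hg2, mul_div_mul_left _ _ hc]
end

section
/- Two 6-dimensional algebras L(β₃,β₄,β₅,γ) and L(β₃',β₄',β₅',γ') with β₃β₄γ ≠ 0 and β₃'β₄'γ' ≠ 0 are related by a transformation (β₃,β₄,β₅,γ) ↦ (β₃',β₄',β₅',γ') of the form β₃'=(D/A²)β₃, β₄'=(D/A³)(β₄-2(B/A)β₃²), β₅'=(D/A⁴)((B/A)γ+β₅-5(B/A)β₃β₄+5(B/A)²β₃³), γ'=(D²/A⁵)γ with AD ≠ 0 if and only if (2β₃β₄γ+4β₃³β₅-5β₃²β₄²)/γ² = (2β₃'β₄'γ'+4β₃'³β₅'-5β₃'²β₄'²)/γ'². -/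
set_option maxHeartbeats 1000000 in
private lemma dim6_aux (β₃ β₄ β₅ γ u b A : ℂ) (hγ : γ ≠ 0) (hu : u ≠ 0) (hA : A ≠ 0) :
    (2 * β₃ * β₄ * γ + 4 * β₃ ^ 3 * β₅ - 5 * β₃ ^ 2 * β₄ ^ 2) / γ ^ 2 =
      (2 * (u * β₃) * (u / A * (β₄ - 2 * b * β₃ ^ 2)) * (u ^ 2 / A * γ)
        + 4 * (u * β₃) ^ 3 * (u / A ^ 2 *
          (b * γ + β₅ - 5 * b * β₃ * β₄ + 5 * b ^ 2 * β₃ ^ 3))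
        - 5 * (u * β₃) ^ 2 * (u / A * (β₄ - 2 * b * β₃ ^ 2)) ^ 2)
        / (u ^ 2 / A * γ) ^ 2 := by
  rw [div_eq_div_iff (pow_ne_zero 2 hγ) (by simp [pow_ne_zero, hu, hA, hγ, div_ne_zero])]
  field_simp
  ring

/-- Two 6-dimensional second-class algebras `L(β₃,β₄,β₅,γ)` and `L(β₃',β₄',β₅',γ')`
with `β₃β₄γ ≠ 0` and `β₃'β₄'γ' ≠ 0` are related by a transformation with scalars
`A, B, D` (`AD ≠ 0`) if and only if the classifying invariant
`(2β₃β₄γ + 4β₃³β₅ - 5β₃²β₄²)/γ²` takes the same value on both. -/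
theorem dim6_iso_iff_invariant (β₃ β₄ β₅ γ β₃' β₄' β₅' γ' : ℂ)
    (h : β₃ * β₄ * γ ≠ 0) (h' : β₃' * β₄' * γ' ≠ 0) :
    (∃ A B D : ℂ, A * D ≠ 0 ∧
        β₃' = D / A ^ 2 * β₃ ∧
        β₄' = D / A ^ 3 * (β₄ - 2 * (B / A) * β₃ ^ 2) ∧
        β₅' = D / A ^ 4 *
          (B / A * γ + β₅ - 5 * (B / A) * β₃ * β₄ + 5 * (B / A) ^ 2 * β₃ ^ 3) ∧
        γ' = D ^ 2 / A ^ 5 * γ) ↔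
      (2 * β₃ * β₄ * γ + 4 * β₃ ^ 3 * β₅ - 5 * β₃ ^ 2 * β₄ ^ 2) / γ ^ 2 =
        (2 * β₃' * β₄' * γ' + 4 * β₃' ^ 3 * β₅' - 5 * β₃' ^ 2 * β₄' ^ 2) / γ' ^ 2 := by
  obtain ⟨h34, hγ⟩ := mul_ne_zero_iff.mp h
  obtain ⟨h3, h4⟩ := mul_ne_zero_iff.mp h34
  obtain ⟨h34', hγ'⟩ := mul_ne_zero_iff.mp h'
  obtain ⟨h3', h4'⟩ := mul_ne_zero_iff.mp h34'
  constructor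
  · rintro ⟨A, B, D, hAD, e3, e4, e5, eγ⟩
    obtain ⟨hA, hD⟩ := mul_ne_zero_iff.mp hAD
    have hu : D / A ^ 2 ≠ 0 := div_ne_zero hD (pow_ne_zero 2 hA)
    have r3 : D / A ^ 3 = D / A ^ 2 / A := by rw [div_div, ← pow_succ]
    have r4 : D / A ^ 4 = D / A ^ 2 / A ^ 2 := by rw [div_div, ← pow_add]
    have r5 : D ^ 2 / A ^ 5 = (D / A ^ 2) ^ 2 / A := by
      rw [div_pow, div_div]; ring_nf
    rw [e3, e4, e5, eγ, r3, r4, r5]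
    exact dim6_aux β₃ β₄ β₅ γ (D / A ^ 2) (B / A) A hγ hu hA
  · intro hinv
    set u : ℂ := β₃' / β₃ with hu
    have hune : u ≠ 0 := div_ne_zero h3' h3
    set A : ℂ := u ^ 2 * γ / γ' with hA
    have hAne : A ≠ 0 := div_ne_zero (mul_ne_zero (pow_ne_zero 2 hune) hγ) hγ'
    set b : ℂ := (β₄ - A * β₄' / u) / (2 * β₃ ^ 2) with hb
    clear_value u A b
    -- the three "easy" conjuncts, in terms of u, b, A
    have c1 : β₃' = u * β₃ := by rw [hu, div_mul_cancel₀ _ h3]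
    have c4 : γ' = u ^ 2 / A * γ := by
      rw [hA]; field_simp
    have c2 : β₄' = u / A * (β₄ - 2 * b * β₃ ^ 2) := by
      have hb' : β₄ - 2 * b * β₃ ^ 2 = A * β₄' / u := by
        rw [hb]; field_simp; ring
      rw [hb']; field_simp
    -- the hard conjunct, via invariance of the classifying quantity
    have key := dim6_aux β₃ β₄ β₅ γ u b A hγ hune hAne
    rw [← c1, ← c2, ← c4] at key
    have e := key.symm.trans hinv
    have e2 := (div_left_inj' (pow_ne_zero 2 hγ')).mp e
    have e3 : (4 * β₃' ^ 3) * (u / A ^ 2 *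
        (b * γ + β₅ - 5 * b * β₃ * β₄ + 5 * b ^ 2 * β₃ ^ 3)) = (4 * β₃' ^ 3) * β₅' := by
      linear_combination e2
    have c3 : β₅' = u / A ^ 2 *
        (b * γ + β₅ - 5 * b * β₃ * β₄ + 5 * b ^ 2 * β₃ ^ 3) :=
      (mul_left_cancel₀ (by simp [pow_ne_zero, h3']) e3).symm
    -- assemble, with D = u * A ^ 2 and B = b * A
    have rDA2 : u * A ^ 2 / A ^ 2 = u := mul_div_cancel_right₀ u (pow_ne_zero 2 hAne)
    have rDA3 : u * A ^ 2 / A ^ 3 = u / A := by field_simp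
    have rDA4 : u * A ^ 2 / A ^ 4 = u / A ^ 2 := by field_simp
    have rDA5 : (u * A ^ 2) ^ 2 / A ^ 5 = u ^ 2 / A := by field_simp
    have rBA : b * A / A = b := mul_div_cancel_right₀ b hAne
    exact ⟨A, b * A, u * A ^ 2,
      mul_ne_zero hAne (mul_ne_zero hune (pow_ne_zero 2 hAne)),
      by rw [rDA2]; exact c1, by rw [rDA3, rBA]; exact c2,
      by rw [rDA4, rBA]; exact c3, by rw [rDA5]; exact c4⟩
end

section
/- Two 6-dimensional algebras L(β₃,0,β₅,γ) and L(β₃',0,β₅',γ') with β₃γ ≠ 0 and β₃'γ' ≠ 0 are related by an admissible transformation (β₃'=(D/A²)β₃, β₄'=(D/A³)(-2(B/A)β₃²) forced to vanish so B=0, β₅'=(D/A⁴)(β₅), γ'=(D²/A⁵)γ restricted to β₄=β₄'=0) if and only if 4β₃³β₅/γ² = 4β₃'³β₅'/γ'²; moreover every λ ∈ ℂ is realized as 4β₃³β₅/γ² for some such parameters. -/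
/-- Two 6-dimensional second-class algebras `L(β₃,0,β₅,γ)` and `L(β₃',0,β₅',γ')` with
`β₃γ ≠ 0`, `β₃'γ' ≠ 0` are related by an admissible transformation (the general rules
with `β₄ = β₄' = 0`, which forces the `β₄'`-equation `0 = (D/A³)(-2(B/A)β₃²)`) if and
only if `4β₃³β₅/γ² = 4β₃'³β₅'/γ'²`; moreover every `λ ∈ ℂ` is realized as
`4β₃³β₅/γ²` for some such parameters. -/
theorem dim6_U4_classification :
    (∀ β₃ β₅ γ β₃' β₅' γ' : ℂ, β₃ * γ ≠ 0 → β₃' * γ' ≠ 0 →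
      ((∃ A B D : ℂ, A * D ≠ 0 ∧
          β₃' = D / A ^ 2 * β₃ ∧
          (0 : ℂ) = D / A ^ 3 * ((0 : ℂ) - 2 * (B / A) * β₃ ^ 2) ∧
          β₅' = D / A ^ 4 *
            (B / A * γ + β₅ - 5 * (B / A) * β₃ * 0 + 5 * (B / A) ^ 2 * β₃ ^ 3) ∧
          γ' = D ^ 2 / A ^ 5 * γ) ↔
        4 * β₃ ^ 3 * β₅ / γ ^ 2 = 4 * β₃' ^ 3 * β₅' / γ' ^ 2)) ∧
      (∀ lam : ℂ, ∃ β₃ β₅ γ : ℂ, β₃ ≠ 0 ∧ γ ≠ 0 ∧ 4 * β₃ ^ 3 * β₅ / γ ^ 2 = lam) := by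
  constructor
  · intro β₃ β₅ γ β₃' β₅' γ' h h'
    have hβ₃ : β₃ ≠ 0 := fun hz => h (by simp [hz])
    have hγ : γ ≠ 0 := fun hz => h (by simp [hz])
    have hβ₃' : β₃' ≠ 0 := fun hz => h' (by simp [hz])
    have hγ' : γ' ≠ 0 := fun hz => h' (by simp [hz])
    constructor
    · rintro ⟨A, B, D, hAD, h1, h2, h3, h4⟩
      have hA : A ≠ 0 := fun hz => hAD (by simp [hz])
      have hD : D ≠ 0 := fun hz => hAD (by simp [hz])
      have hB : B = 0 := by
        rw [eq_comm] at h2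
        field_simp at h2
        simpa [hD, hβ₃] using h2
      subst hB h1 h3 h4
      field_simp
      ring
    · intro heq
      rw [div_eq_div_iff (pow_ne_zero 2 hγ) (pow_ne_zero 2 hγ')] at heq
      obtain ⟨A, hAdef⟩ : ∃ A : ℂ, A = β₃' ^ 2 * γ / (β₃ ^ 2 * γ') := ⟨_, rfl⟩
      have hA : A ≠ 0 := hAdef ▸ div_ne_zero (mul_ne_zero (pow_ne_zero 2 hβ₃') hγ)
        (mul_ne_zero (pow_ne_zero 2 hβ₃) hγ')
      refine ⟨A, 0, A ^ 2 * β₃' / β₃,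
        mul_ne_zero hA (div_ne_zero (mul_ne_zero (pow_ne_zero 2 hA) hβ₃') hβ₃),
        ?_, by simp, ?_, ?_⟩
      · field_simp
      · field_simp
        rw [hAdef]
        field_simp
        linear_combination (-(1/4) * β₃' ^ 4 * γ ^ 2) * heq
      · field_simp
        rw [hAdef]
        field_simp
  · intro lam
    exact ⟨1, lam / 4, 1, one_ne_zero, one_ne_zero, by field_simp⟩
end

section
/- Every 5-dimensional second-class parameter vector (β₃,β₄,γ) with β₃ ≠ 0, γ = 2β₃², β₄ ≠ 0 can be transformed to (1,1,2) by some transformation β₃'=(D/A²)β₃, β₄'=(D/A³)((B/A)γ+β₄-2(B/A)β₃²), γ'=(D²/A⁴)γ with AD ≠ 0. -/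
/-- Every 5-dimensional second-class parameter vector `(β₃,β₄,γ)` with `β₃ ≠ 0`,
`γ = 2β₃²`, `β₄ ≠ 0` can be transformed to `(1,1,2)` by some transformation
`β₃'=(D/A²)β₃`, `β₄'=(D/A³)((B/A)γ+β₄-2(B/A)β₃²)`, `γ'=(D²/A⁴)γ` with `AD ≠ 0`. -/
theorem dim5_U2_normal_form (β₃ β₄ γ : ℂ) (hβ₃ : β₃ ≠ 0) (hγ : γ = 2 * β₃ ^ 2)
    (hβ₄ : β₄ ≠ 0) :
    ∃ A B D : ℂ, A * D ≠ 0 ∧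
      (1 : ℂ) = D / A ^ 2 * β₃ ∧
      (1 : ℂ) = D / A ^ 3 * (B / A * γ + β₄ - 2 * (B / A) * β₃ ^ 2) ∧
      (2 : ℂ) = D ^ 2 / A ^ 4 * γ := by
  refine ⟨β₄ / β₃, 0, β₄ ^ 2 / β₃ ^ 3, ?_, ?_, ?_, ?_⟩
  · simp [hβ₃, hβ₄]
  all_goals
    subst hγ <;> field_simp <;> ring
end

section
/- Every 5-dimensional second-class parameter vector (β₃,β₄,γ) with β₃ = 0 and γ ≠ 0 can be transformed to (0,0,1), and every vector with β₃ = 0, γ = 0, β₄ ≠ 0 can be transformed to (0,1,0), by transformations β₃'=(D/A²)β₃, β₄'=(D/A³)((B/A)γ+β₄-2(B/A)β₃²), γ'=(D²/A⁴)γ with AD ≠ 0. -/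
/-- Every 5-dimensional second-class parameter vector `(β₃,β₄,γ)` with `β₃ = 0` and
`γ ≠ 0` can be transformed to `(0,0,1)`, and every one with `β₃ = 0`, `γ = 0`,
`β₄ ≠ 0` can be transformed to `(0,1,0)`, by the transformations
`β₃'=(D/A²)β₃`, `β₄'=(D/A³)((B/A)γ+β₄-2(B/A)β₃²)`, `γ'=(D²/A⁴)γ` with `AD ≠ 0`. -/
theorem dim5_U4_U5_normal_forms :
    (∀ β₄ γ : ℂ, γ ≠ 0 →
      ∃ A B D : ℂ, A * D ≠ 0 ∧
        (0 : ℂ) = D / A ^ 2 * 0 ∧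
        (0 : ℂ) = D / A ^ 3 * (B / A * γ + β₄ - 2 * (B / A) * (0 : ℂ) ^ 2) ∧
        (1 : ℂ) = D ^ 2 / A ^ 4 * γ) ∧
    (∀ β₄ : ℂ, β₄ ≠ 0 →
      ∃ A B D : ℂ, A * D ≠ 0 ∧
        (0 : ℂ) = D / A ^ 2 * 0 ∧
        (1 : ℂ) = D / A ^ 3 * (B / A * 0 + β₄ - 2 * (B / A) * (0 : ℂ) ^ 2) ∧
        (0 : ℂ) = D ^ 2 / A ^ 4 * 0) := by
  constructor
  · intro β₄ γ hγ
    obtain ⟨D, hD⟩ := IsAlgClosed.exists_pow_nat_eq (k := ℂ) γ⁻¹ (n := 2) (by norm_num)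
    have hD0 : D ≠ 0 := by
      intro h
      exact inv_ne_zero hγ (by rw [← hD, h]; ring)
    refine ⟨1, -β₄ / γ, D, by simpa using hD0, by ring, ?_, ?_⟩
    · field_simp
      ring
    · field_simp [hD]
      rw [hD, inv_mul_cancel₀ hγ]
  · intro β₄ hβ
    refine ⟨1, 0, β₄⁻¹, by simpa using inv_ne_zero hβ, by ring, ?_, by ring⟩
    field_simp
    ring
end

section
/- The parameter vectors (1,0,λ) for λ ∈ ℂ, (1,1,2), (0,0,1), (0,1,0), (0,0,0) are pairwise inequivalent under the action β₃'=(D/A²)β₃, β₄'=(D/A³)((B/A)γ+β₄-2(B/A)β₃²), γ'=(D²/A⁴)γ (AD ≠ 0), and (1,0,λ) is equivalent to (1,0,λ') iff λ = λ'. Hence they represent pairwise nonisomorphic 5-dimensional filiform Leibniz algebras. -/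
/-- Equivalence of 5-dimensional second-class parameter vectors `(β₃,β₄,γ)` under the
action `β₃'=(D/A²)β₃`, `β₄'=(D/A³)((B/A)γ+β₄-2(B/A)β₃²)`, `γ'=(D²/A⁴)γ`, `AD ≠ 0`. -/
def equiv5 (p q : ℂ × ℂ × ℂ) : Prop :=
  ∃ A B D : ℂ, A * D ≠ 0 ∧
    q.1 = D / A ^ 2 * p.1 ∧
    q.2.1 = D / A ^ 3 * (B / A * p.2.2 + p.2.1 - 2 * (B / A) * p.1 ^ 2) ∧
    q.2.2 = D ^ 2 / A ^ 4 * p.2.2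

/-- The parameter vectors `(1,0,λ)` (λ ∈ ℂ), `(1,1,2)`, `(0,0,1)`, `(0,1,0)`, `(0,0,0)`
are pairwise inequivalent, and `(1,0,λ)` is equivalent to `(1,0,λ')` iff `λ = λ'`.
Hence they represent pairwise nonisomorphic 5-dimensional filiform Leibniz algebras. -/
theorem dim5_representatives_pairwise_nonequivalent :
    (∀ l l' : ℂ, equiv5 (1, 0, l) (1, 0, l') ↔ l = l') ∧
    (∀ l : ℂ,
      ¬ equiv5 (1, 0, l) (1, 1, 2) ∧
      ¬ equiv5 (1, 0, l) (0, 0, 1) ∧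
      ¬ equiv5 (1, 0, l) (0, 1, 0) ∧
      ¬ equiv5 (1, 0, l) (0, 0, 0)) ∧
    ¬ equiv5 (1, 1, 2) (0, 0, 1) ∧
    ¬ equiv5 (1, 1, 2) (0, 1, 0) ∧
    ¬ equiv5 (1, 1, 2) (0, 0, 0) ∧
    ¬ equiv5 (0, 0, 1) (0, 1, 0) ∧
    ¬ equiv5 (0, 0, 1) (0, 0, 0) ∧
    ¬ equiv5 (0, 1, 0) (0, 0, 0) := by
  refine ⟨?_, ?_, ?_, ?_, ?_, ?_, ?_, ?_⟩
  · intro l l'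
    constructor
    · rintro ⟨A, B, D, hAD, h1, h2, h3⟩
      have hA : A ≠ 0 := fun h => hAD (by simp [h])
      have hD : D ≠ 0 := fun h => hAD (by simp [h])
      simp only at h1 h2 h3
      have hDA : D = A ^ 2 := by field_simp at h1; exact h1.symm
      subst hDA
      field_simp at h3
      have h4 : l * A ^ 4 = l' * A ^ 4 := by linear_combination (-A ^ 4) * h3
      exact mul_right_cancel₀ (pow_ne_zero 4 hA) h4
    · rintro rfl
      exact ⟨1, 0, 1, by norm_num, by norm_num, by norm_num, by norm_num⟩
  · intro l
    refine ⟨?_, ?_, ?_, ?_⟩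
    · rintro ⟨A, B, D, hAD, h1, h2, h3⟩
      have hA : A ≠ 0 := fun h => hAD (by simp [h])
      have hD : D ≠ 0 := fun h => hAD (by simp [h])
      simp only at h1 h2 h3
      have hDA : D = A ^ 2 := by field_simp at h1; exact h1.symm
      subst hDA
      field_simp at h3
      have h4 : l * A ^ 4 = 2 * A ^ 4 := by linear_combination (-A ^ 4) * h3
      have hl : l = 2 := mul_right_cancel₀ (pow_ne_zero 4 hA) h4
      subst hl
      field_simp at h2
      exact hA (pow_eq_zero_iff (n := 4) (by norm_num) |>.mp (by linear_combination A ^ 2 * h2))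
    · rintro ⟨A, B, D, hAD, h1, -, -⟩
      have hA : A ≠ 0 := fun h => hAD (by simp [h])
      have hD : D ≠ 0 := fun h => hAD (by simp [h])
      simp only at h1
      field_simp at h1
      exact hD (h1.symm.trans (zero_mul _))
    · rintro ⟨A, B, D, hAD, h1, -, -⟩
      have hA : A ≠ 0 := fun h => hAD (by simp [h])
      have hD : D ≠ 0 := fun h => hAD (by simp [h])
      simp only at h1
      field_simp at h1
      exact hD (h1.symm.trans (zero_mul _))
    · rintro ⟨A, B, D, hAD, h1, -, -⟩
      have hA : A ≠ 0 := fun h => hAD (by simp [h])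
      have hD : D ≠ 0 := fun h => hAD (by simp [h])
      simp only at h1
      field_simp at h1
      exact hD (h1.symm.trans (zero_mul _))
  · rintro ⟨A, B, D, hAD, h1, -, -⟩
    have hA : A ≠ 0 := fun h => hAD (by simp [h])
    have hD : D ≠ 0 := fun h => hAD (by simp [h])
    simp only at h1
    field_simp at h1
    exact hD (h1.symm.trans (zero_mul _))
  · rintro ⟨A, B, D, hAD, h1, -, -⟩
    have hA : A ≠ 0 := fun h => hAD (by simp [h])
    have hD : D ≠ 0 := fun h => hAD (by simp [h])
    simp only at h1
    field_simp at h1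
    exact hD (h1.symm.trans (zero_mul _))
  · rintro ⟨A, B, D, hAD, h1, -, -⟩
    have hA : A ≠ 0 := fun h => hAD (by simp [h])
    have hD : D ≠ 0 := fun h => hAD (by simp [h])
    simp only at h1
    field_simp at h1
    exact hD (h1.symm.trans (zero_mul _))
  · rintro ⟨A, B, D, hAD, -, -, h3⟩
    have hA : A ≠ 0 := fun h => hAD (by simp [h])
    have hD : D ≠ 0 := fun h => hAD (by simp [h])
    simp only at h3
    field_simp at h3
    exact hD (pow_eq_zero_iff two_ne_zero |>.mp (h3.symm.trans (zero_mul _)))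
  · rintro ⟨A, B, D, hAD, -, -, h3⟩
    have hA : A ≠ 0 := fun h => hAD (by simp [h])
    have hD : D ≠ 0 := fun h => hAD (by simp [h])
    simp only at h3
    field_simp at h3
    exact hD (pow_eq_zero_iff two_ne_zero |>.mp (h3.symm.trans (zero_mul _)))
  · rintro ⟨A, B, D, hAD, -, h2, -⟩
    have hA : A ≠ 0 := fun h => hAD (by simp [h])
    have hD : D ≠ 0 := fun h => hAD (by simp [h])
    simp only at h2
    field_simp at h2
    exact hD (by simpa [hA] using h2.symm)
end

section
/- Every (β₃,β₄,γ) ∈ ℂ³ is equivalent, under the action β₃'=(D/A²)β₃, β₄'=(D/A³)((B/A)γ+β₄-2(B/A)β₃²), γ'=(D²/A⁴)γ with AD ≠ 0, to exactly one of: (1,0,λ) for some λ ∈ ℂ, (1,1,2), (0,0,1), (0,1,0), (0,0,0). -/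
/-- The set of normal-form representatives of 5-dimensional second-class filiform
Leibniz algebras: `(1,0,λ)` for `λ ∈ ℂ`, `(1,1,2)`, `(0,0,1)`, `(0,1,0)`, `(0,0,0)`. -/
def reps5 : Set (ℂ × ℂ × ℂ) :=
  {p | (∃ l : ℂ, p = (1, 0, l)) ∨ p = (1, 1, 2) ∨ p = (0, 0, 1) ∨ p = (0, 1, 0) ∨
    p = (0, 0, 0)}

/-- Every `(β₃,β₄,γ) ∈ ℂ³` is equivalent, under the action with `AD ≠ 0`, to exactly
one of `(1,0,λ)` (λ ∈ ℂ), `(1,1,2)`, `(0,0,1)`, `(0,1,0)`, `(0,0,0)`. -/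
theorem dim5_classification (p : ℂ × ℂ × ℂ) :
    ∃! q : ℂ × ℂ × ℂ, q ∈ reps5 ∧ equiv5 p q := by
  obtain ⟨b3, b4, g⟩ := p
  by_cases hb3 : b3 = 0
  · subst hb3
    by_cases hg : g = 0
    · subst hg
      by_cases hb4 : b4 = 0
      · subst hb4
        refine ⟨(0,0,0), ⟨Or.inr (Or.inr (Or.inr (Or.inr rfl))),
          1, 0, 1, by norm_num⟩, ?_⟩
        rintro ⟨q1,q2,q3⟩ ⟨hrep, A, B, D, hAD, h1, h2, h3⟩
        have hA : A ≠ 0 := fun h => hAD (by simp [h])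
        have hD : D ≠ 0 := fun h => hAD (by simp [h])
        simp only at h1 h2 h3
        rcases hrep with ⟨l, hl⟩ | hl | hl | hl | hl <;>
          simp only [Prod.mk.injEq] at hl ⊢
        · obtain ⟨e1, e2, e3⟩ := hl
          exfalso; rw [e1] at h1; simp [hA, hD] at h1
        · obtain ⟨e1, e2, e3⟩ := hl
          exfalso; rw [e1] at h1; simp [hA, hD] at h1
        · obtain ⟨e1, e2, e3⟩ := hl
          exfalso; rw [e3] at h3; simp [hA, hD] at h3
        · obtain ⟨e1, e2, e3⟩ := hl
          exfalso; rw [e2] at h2; simp [hA, hD] at h2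
        · exact hl
      · -- rep (0,1,0)
        refine ⟨(0,1,0), ⟨Or.inr (Or.inr (Or.inr (Or.inl rfl))),
          1, 0, 1/b4, by field_simp; simp [hb4]⟩, ?_⟩
        rintro ⟨q1,q2,q3⟩ ⟨hrep, A, B, D, hAD, h1, h2, h3⟩
        have hA : A ≠ 0 := fun h => hAD (by simp [h])
        have hD : D ≠ 0 := fun h => hAD (by simp [h])
        simp only at h1 h2 h3
        rcases hrep with ⟨l, hl⟩ | hl | hl | hl | hl <;>
          simp only [Prod.mk.injEq] at hl ⊢
        · obtain ⟨e1, e2, e3⟩ := hl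
          exfalso; rw [e1] at h1; simp [hA, hD] at h1
        · obtain ⟨e1, e2, e3⟩ := hl
          exfalso; rw [e1] at h1; simp [hA, hD] at h1
        · obtain ⟨e1, e2, e3⟩ := hl
          exfalso; rw [e3] at h3; simp [hA, hD] at h3
        · exact hl
        · obtain ⟨e1, e2, e3⟩ := hl
          exfalso; rw [e2] at h2; simp [hA, hD, hb4] at h2
    · -- rep (0,0,1)
      obtain ⟨w, hw⟩ := IsAlgClosed.exists_pow_nat_eq g (n := 2) (by norm_num)
      have hw0 : w ≠ 0 := fun h => hg (by rw [← hw, h]; ring)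
      refine ⟨(0,0,1), ⟨Or.inr (Or.inr (Or.inl rfl)),
        1, -b4/g, 1/w, by simp [hw0], by simp, ?_, ?_⟩, ?_⟩
      · field_simp; ring
      · simp only
        field_simp
        linear_combination hw
      rintro ⟨q1,q2,q3⟩ ⟨hrep, A, B, D, hAD, h1, h2, h3⟩
      have hA : A ≠ 0 := fun h => hAD (by simp [h])
      have hD : D ≠ 0 := fun h => hAD (by simp [h])
      simp only at h1 h2 h3
      rcases hrep with ⟨l, hl⟩ | hl | hl | hl | hl <;>
        simp only [Prod.mk.injEq] at hl ⊢
      · obtain ⟨e1, e2, e3⟩ := hl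
        exfalso; rw [e1] at h1; simp [hA, hD] at h1
      · obtain ⟨e1, e2, e3⟩ := hl
        exfalso; rw [e1] at h1; simp [hA, hD] at h1
      · exact hl
      · obtain ⟨e1, e2, e3⟩ := hl
        exfalso; rw [e3] at h3; simp [hA, hD, hg, div_eq_zero_iff,
          pow_eq_zero_iff] at h3
      · obtain ⟨e1, e2, e3⟩ := hl
        exfalso; rw [e3] at h3; simp [hA, hD, hg, div_eq_zero_iff,
          pow_eq_zero_iff] at h3
  · by_cases hcase : g = 2 * b3 ^ 2 ∧ b4 ≠ 0
    · -- rep (1,1,2)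
      obtain ⟨hg2, hb4⟩ := hcase
      subst hg2
      refine ⟨(1,1,2), ⟨Or.inr (Or.inl rfl),
        b4/b3, 0, b4^2/b3^3, by
          refine ⟨by simp [hb3, hb4], ?_, ?_, ?_⟩ <;> field_simp <;> ring⟩, ?_⟩
      rintro ⟨q1,q2,q3⟩ ⟨hrep, A, B, D, hAD, h1, h2, h3⟩
      have hA : A ≠ 0 := fun h => hAD (by simp [h])
      have hD : D ≠ 0 := fun h => hAD (by simp [h])
      simp only at h1 h2 h3
      rcases hrep with ⟨l, hl⟩ | hl | hl | hl | hl <;>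
        simp only [Prod.mk.injEq] at hl ⊢
      · obtain ⟨e1, e2, e3⟩ := hl
        exfalso
        rw [e2, show B / A * (2*b3^2) + b4 - 2 * (B / A) * b3 ^ 2 = b4 by ring] at h2
        simp [hA, hD, hb4, div_eq_zero_iff, pow_eq_zero_iff] at h2
      · exact hl
      · obtain ⟨e1, e2, e3⟩ := hl
        exfalso; rw [e1] at h1
        simp [hA, hD, hb3, div_eq_zero_iff, pow_eq_zero_iff] at h1
      · obtain ⟨e1, e2, e3⟩ := hl
        exfalso; rw [e1] at h1
        simp [hA, hD, hb3, div_eq_zero_iff, pow_eq_zero_iff] at h1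
      · obtain ⟨e1, e2, e3⟩ := hl
        exfalso; rw [e1] at h1
        simp [hA, hD, hb3, div_eq_zero_iff, pow_eq_zero_iff] at h1
    · -- rep (1,0,g/b3^2)
      refine ⟨(1, 0, g/b3^2), ⟨Or.inl ⟨g/b3^2, rfl⟩, ?_⟩, ?_⟩
      · by_cases hgg : g = 2 * b3 ^ 2
        · have hb4 : b4 = 0 := by
            by_contra h; exact hcase ⟨hgg, h⟩
          subst hb4
          exact ⟨1, 0, 1/b3, by simp [hb3], by field_simp, by simp,
            by field_simp⟩
        · refine ⟨1, b4/(2*b3^2 - g), 1/b3, by simp [hb3], by field_simp, ?_,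
            by field_simp⟩
          have h2 : (2:ℂ)*b3^2 - g ≠ 0 := fun h => hgg (by linear_combination -h)
          linear_combination (1/b3) * (div_mul_cancel₀ b4 h2)
      · rintro ⟨q1,q2,q3⟩ ⟨hrep, A, B, D, hAD, h1, h2, h3⟩
        have hA : A ≠ 0 := fun h => hAD (by simp [h])
        have hD : D ≠ 0 := fun h => hAD (by simp [h])
        simp only at h1 h2 h3
        have hpow : D^2/A^4 = (D/A^2)^2 := by
          rw [div_pow]; ring_nf
        rcases hrep with ⟨l, hl⟩ | hl | hl | hl | hl <;>
          simp only [Prod.mk.injEq] at hl ⊢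
        · obtain ⟨e1, e2, e3⟩ := hl
          subst e1 e2 e3
          refine ⟨rfl, rfl, ?_⟩
          have ht : D / A^2 = 1/b3 := by
            field_simp at h1 ⊢; linear_combination -h1
          rw [hpow, ht] at h3
          rw [h3]; field_simp
        · obtain ⟨e1, e2, e3⟩ := hl
          exfalso
          subst e1 e2 e3
          have ht : D / A^2 = 1/b3 := by
            field_simp at h1 ⊢; linear_combination -h1
          rw [hpow, ht] at h3
          have hg2 : g = 2 * b3^2 := by
            field_simp at h3; linear_combination -h3
          have hb4 : b4 = 0 := by
            by_contra h; exact hcase ⟨hg2, h⟩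
          subst hb4 hg2
          rw [show B / A * (2*b3^2) + 0 - 2 * (B / A) * b3 ^ 2 = 0 by ring] at h2
          simp at h2
        · obtain ⟨e1, e2, e3⟩ := hl
          exfalso; rw [e1] at h1
          simp [hA, hD, hb3, div_eq_zero_iff, pow_eq_zero_iff] at h1
        · obtain ⟨e1, e2, e3⟩ := hl
          exfalso; rw [e1] at h1
          simp [hA, hD, hb3, div_eq_zero_iff, pow_eq_zero_iff] at h1
        · obtain ⟨e1, e2, e3⟩ := hl
          exfalso; rw [e1] at h1
          simp [hA, hD, hb3, div_eq_zero_iff, pow_eq_zero_iff] at h1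
end

section
/- Under the 7-dimensional transformation rules β₃'=(D/A²)β₃, β₄'=(D/A³)(β₄-2(B/A)β₃²), β₅'=(D/A⁴)(β₅-5(B/A)β₃β₄+5(B/A)²β₃³), β₆'=(D/A⁵)((B/A)γ+β₆-6(B/A)β₃β₅+21(B/A)²β₃²β₄-3(B/A)β₄²-14(B/A)³β₃⁴), γ'=(D²/A⁶)γ (AD ≠ 0), the quantity (4β₃β₅-5β₄²)³ / (16(β₄γ+2β₃²β₆-6β₃β₄β₅+4β₄³)²) is invariant on the set where the denominator is nonzero. -/
set_option maxHeartbeats 1600000 in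
/-- Under the 7-dimensional transformation rules (scalars `A,B,D`, `AD ≠ 0`), the
quantity `(4β₃β₅-5β₄²)³ / (16(β₄γ+2β₃²β₆-6β₃β₄β₅+4β₄³)²)` is invariant on the set
where the denominator is nonzero. -/
theorem dim7_invariant_rho34 (A B D β₃ β₄ β₅ β₆ γ β₃' β₄' β₅' β₆' γ' : ℂ)
    (hAD : A * D ≠ 0)
    (h3 : β₃' = D / A ^ 2 * β₃)
    (h4 : β₄' = D / A ^ 3 * (β₄ - 2 * (B / A) * β₃ ^ 2))
    (h5 : β₅' = D / A ^ 4 *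
      (β₅ - 5 * (B / A) * β₃ * β₄ + 5 * (B / A) ^ 2 * β₃ ^ 3))
    (h6 : β₆' = D / A ^ 5 *
      (B / A * γ + β₆ - 6 * (B / A) * β₃ * β₅ + 21 * (B / A) ^ 2 * β₃ ^ 2 * β₄ -
        3 * (B / A) * β₄ ^ 2 - 14 * (B / A) ^ 3 * β₃ ^ 4))
    (hg : γ' = D ^ 2 / A ^ 6 * γ)
    (hden : β₄ * γ + 2 * β₃ ^ 2 * β₆ - 6 * β₃ * β₄ * β₅ + 4 * β₄ ^ 3 ≠ 0) :
    β₄' * γ' + 2 * β₃' ^ 2 * β₆' - 6 * β₃' * β₄' * β₅' + 4 * β₄' ^ 3 ≠ 0 ∧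
      (4 * β₃' * β₅' - 5 * β₄' ^ 2) ^ 3 /
          (16 * (β₄' * γ' + 2 * β₃' ^ 2 * β₆' - 6 * β₃' * β₄' * β₅' + 4 * β₄' ^ 3) ^ 2) =
        (4 * β₃ * β₅ - 5 * β₄ ^ 2) ^ 3 /
          (16 * (β₄ * γ + 2 * β₃ ^ 2 * β₆ - 6 * β₃ * β₄ * β₅ + 4 * β₄ ^ 3) ^ 2) := by
  have hA : A ≠ 0 := fun h => hAD (by simp [h])
  have hD : D ≠ 0 := fun h => hAD (by simp [h])
  have hnum : 4 * β₃' * β₅' - 5 * β₄' ^ 2 =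
      (D / A ^ 3) ^ 2 * (4 * β₃ * β₅ - 5 * β₄ ^ 2) := by
    rw [h3, h4, h5]; ring
  have hden' : β₄' * γ' + 2 * β₃' ^ 2 * β₆' - 6 * β₃' * β₄' * β₅' + 4 * β₄' ^ 3 =
      (D / A ^ 3) ^ 3 * (β₄ * γ + 2 * β₃ ^ 2 * β₆ - 6 * β₃ * β₄ * β₅ + 4 * β₄ ^ 3) := by
    rw [h3, h4, h5, h6, hg]; ring
  have hcne : D / A ^ 3 ≠ 0 := div_ne_zero hD (pow_ne_zero _ hA)
  rw [hnum, hden']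
  generalize D / A ^ 3 = c at hcne ⊢
  refine ⟨mul_ne_zero (pow_ne_zero _ hcne) hden, ?_⟩
  rw [mul_pow, mul_pow,
    show ((c : ℂ) ^ 2) ^ 3 = (c ^ 3) ^ 2 by ring,
    show (16 : ℂ) * ((c ^ 3) ^ 2 * (β₄ * γ + 2 * β₃ ^ 2 * β₆ - 6 * β₃ * β₄ * β₅ + 4 * β₄ ^ 3) ^ 2)
      = (c ^ 3) ^ 2 * (16 * (β₄ * γ + 2 * β₃ ^ 2 * β₆ - 6 * β₃ * β₄ * β₅ + 4 * β₄ ^ 3) ^ 2) by ring]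
  exact mul_div_mul_left _ _ (pow_ne_zero _ (pow_ne_zero _ hcne))
end

section
/- Under the 7-dimensional transformation rules β₃'=(D/A²)β₃, β₄'=(D/A³)(β₄-2(B/A)β₃²), β₅'=(D/A⁴)(β₅-5(B/A)β₃β₄+5(B/A)²β₃³), β₆'=(D/A⁵)((B/A)γ+β₆-6(B/A)β₃β₅+21(B/A)²β₃²β₄-3(B/A)β₄²-14(B/A)³β₃⁴), γ'=(D²/A⁶)γ (AD ≠ 0), the quantity γ(4β₃β₅-5β₄²)² / (4(β₄γ+2β₃²β₆-6β₃β₄β₅+4β₄³)²) is invariant on the set where the denominator is nonzero. -/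
set_option maxHeartbeats 2000000


/-- Under the 7-dimensional transformation rules (scalars `A,B,D`, `AD ≠ 0`), the
quantity `γ(4β₃β₅-5β₄²)² / (4(β₄γ+2β₃²β₆-6β₃β₄β₅+4β₄³)²)` is invariant on the set
where the denominator is nonzero. -/
theorem dim7_invariant_rho5 (A B D β₃ β₄ β₅ β₆ γ β₃' β₄' β₅' β₆' γ' : ℂ)
    (hAD : A * D ≠ 0)
    (h3 : β₃' = D / A ^ 2 * β₃)
    (h4 : β₄' = D / A ^ 3 * (β₄ - 2 * (B / A) * β₃ ^ 2))
    (h5 : β₅' = D / A ^ 4 *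
      (β₅ - 5 * (B / A) * β₃ * β₄ + 5 * (B / A) ^ 2 * β₃ ^ 3))
    (h6 : β₆' = D / A ^ 5 *
      (B / A * γ + β₆ - 6 * (B / A) * β₃ * β₅ + 21 * (B / A) ^ 2 * β₃ ^ 2 * β₄ -
        3 * (B / A) * β₄ ^ 2 - 14 * (B / A) ^ 3 * β₃ ^ 4))
    (hg : γ' = D ^ 2 / A ^ 6 * γ)
    (hden : β₄ * γ + 2 * β₃ ^ 2 * β₆ - 6 * β₃ * β₄ * β₅ + 4 * β₄ ^ 3 ≠ 0) :
    β₄' * γ' + 2 * β₃' ^ 2 * β₆' - 6 * β₃' * β₄' * β₅' + 4 * β₄' ^ 3 ≠ 0 ∧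
      γ' * (4 * β₃' * β₅' - 5 * β₄' ^ 2) ^ 2 /
          (4 * (β₄' * γ' + 2 * β₃' ^ 2 * β₆' - 6 * β₃' * β₄' * β₅' + 4 * β₄' ^ 3) ^ 2) =
        γ * (4 * β₃ * β₅ - 5 * β₄ ^ 2) ^ 2 /
          (4 * (β₄ * γ + 2 * β₃ ^ 2 * β₆ - 6 * β₃ * β₄ * β₅ + 4 * β₄ ^ 3) ^ 2) := by
  have hA : A ≠ 0 := fun h => hAD (by simp [h])
  have hD : D ≠ 0 := fun h => hAD (by simp [h])
  subst h3 h4 h5 h6 hg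
  have hden' : β₄ * γ + 2 * β₃ ^ 2 * β₆ - 6 * β₃ * β₄ * β₅ + 4 * β₄ ^ 3 ≠ 0 := hden
  have key : D / A ^ 3 * (β₄ - 2 * (B / A) * β₃ ^ 2) * (D ^ 2 / A ^ 6 * γ) +
      2 * (D / A ^ 2 * β₃) ^ 2 * (D / A ^ 5 *
        (B / A * γ + β₆ - 6 * (B / A) * β₃ * β₅ + 21 * (B / A) ^ 2 * β₃ ^ 2 * β₄ -
          3 * (B / A) * β₄ ^ 2 - 14 * (B / A) ^ 3 * β₃ ^ 4)) -
      6 * (D / A ^ 2 * β₃) * (D / A ^ 3 * (β₄ - 2 * (B / A) * β₃ ^ 2)) *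
        (D / A ^ 4 * (β₅ - 5 * (B / A) * β₃ * β₄ + 5 * (B / A) ^ 2 * β₃ ^ 3)) +
      4 * (D / A ^ 3 * (β₄ - 2 * (B / A) * β₃ ^ 2)) ^ 3 =
      D ^ 3 / A ^ 9 * (β₄ * γ + 2 * β₃ ^ 2 * β₆ - 6 * β₃ * β₄ * β₅ + 4 * β₄ ^ 3) := by
    simp only [div_eq_mul_inv, ← inv_pow]
    ring
  have keyn : 4 * (D / A ^ 2 * β₃) * (D / A ^ 4 *
      (β₅ - 5 * (B / A) * β₃ * β₄ + 5 * (B / A) ^ 2 * β₃ ^ 3)) -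
      5 * (D / A ^ 3 * (β₄ - 2 * (B / A) * β₃ ^ 2)) ^ 2 =
      D ^ 2 / A ^ 6 * (4 * β₃ * β₅ - 5 * β₄ ^ 2) := by
    simp only [div_eq_mul_inv, ← inv_pow]
    ring
  rw [key, keyn]
  constructor
  · exact mul_ne_zero (div_ne_zero (pow_ne_zero _ hD) (pow_ne_zero _ hA)) hden'
  · rw [div_eq_div_iff]
    · simp only [div_eq_mul_inv, ← inv_pow]
      ring
    · exact mul_ne_zero (by norm_num : (4:ℂ) ≠ 0) (pow_ne_zero _ (mul_ne_zero
        (div_ne_zero (pow_ne_zero _ hD) (pow_ne_zero _ hA)) hden'))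
    · exact mul_ne_zero (by norm_num : (4:ℂ) ≠ 0) (pow_ne_zero _ hden')
end

section
/- The polynomial combination 4β₃β₅ - 5β₄² is a relative invariant: under the transformations β₃'=(D/A²)β₃, β₄'=(D/A³)(β₄-2(B/A)β₃²), β₅'=(D/A⁴)(β₅-5(B/A)β₃β₄+5(B/A)²β₃³) with AD ≠ 0, one has 4β₃'β₅' - 5β₄'² = (D²/A⁶)(4β₃β₅ - 5β₄²). In particular the vanishing of 4β₃β₅ - 5β₄² is an isomorphism invariant. -/
/-- `4β₃β₅ - 5β₄²` is a relative invariant: under the transformations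
`β₃'=(D/A²)β₃`, `β₄'=(D/A³)(β₄-2(B/A)β₃²)`, `β₅'=(D/A⁴)(β₅-5(B/A)β₃β₄+5(B/A)²β₃³)`
with `AD ≠ 0`, one has `4β₃'β₅' - 5β₄'² = (D²/A⁶)(4β₃β₅ - 5β₄²)`. In particular the
vanishing of `4β₃β₅ - 5β₄²` is an isomorphism invariant. -/
theorem relative_invariant_deg2 (A B D β₃ β₄ β₅ β₃' β₄' β₅' : ℂ) (hAD : A * D ≠ 0)
    (h3 : β₃' = D / A ^ 2 * β₃)
    (h4 : β₄' = D / A ^ 3 * (β₄ - 2 * (B / A) * β₃ ^ 2))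
    (h5 : β₅' = D / A ^ 4 *
      (β₅ - 5 * (B / A) * β₃ * β₄ + 5 * (B / A) ^ 2 * β₃ ^ 3)) :
    4 * β₃' * β₅' - 5 * β₄' ^ 2 = D ^ 2 / A ^ 6 * (4 * β₃ * β₅ - 5 * β₄ ^ 2) ∧
      (4 * β₃' * β₅' - 5 * β₄' ^ 2 = 0 ↔ 4 * β₃ * β₅ - 5 * β₄ ^ 2 = 0) := by
  have hA : A ≠ 0 := fun h => hAD (by simp [h])
  have hD : D ≠ 0 := fun h => hAD (by simp [h])
  have key : 4 * β₃' * β₅' - 5 * β₄' ^ 2 = D ^ 2 / A ^ 6 * (4 * β₃ * β₅ - 5 * β₄ ^ 2) := by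
    subst h3 h4 h5
    field_simp
    ring_nf
  refine ⟨key, ?_⟩
  rw [key]
  have hne : D ^ 2 / A ^ 6 ≠ 0 := div_ne_zero (pow_ne_zero _ hD) (pow_ne_zero _ hA)
  exact mul_eq_zero.trans (or_iff_right hne)
end

section
/- The polynomial combination β₃²β₆ - 3β₃β₄β₅ + 2β₄³ transforms under β₃'=(D/A²)β₃, β₄'=(D/A³)(β₄-2(B/A)β₃²), β₅'=(D/A⁴)(β₅-5(B/A)β₃β₄+5(B/A)²β₃³), β₆'=(D/A⁵)(β₆-6(B/A)β₃β₅+21(B/A)²β₃²β₄-3(B/A)β₄²-14(B/A)³β₃⁴) (AD ≠ 0) by a nonzero scalar multiple: there exists a nonzero c ∈ ℂ depending only on A, B, D, β₃, β₄, β₅, β₆ being arbitrary, namely β₃'²β₆' - 3β₃'β₄'β₅' + 2β₄'³ = (D³/A⁹)(β₃²β₆ - 3β₃β₄β₅ + 2β₄³). In particular its vanishing is an isomorphism invariant. -/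
/-- `β₃²β₆ - 3β₃β₄β₅ + 2β₄³` is a relative invariant: under the transformations
`β₃'=(D/A²)β₃`, `β₄'=(D/A³)(β₄-2(B/A)β₃²)`, `β₅'=(D/A⁴)(β₅-5(B/A)β₃β₄+5(B/A)²β₃³)`,
`β₆'=(D/A⁵)(β₆-6(B/A)β₃β₅+21(B/A)²β₃²β₄-3(B/A)β₄²-14(B/A)³β₃⁴)` with `AD ≠ 0`,
one has `β₃'²β₆' - 3β₃'β₄'β₅' + 2β₄'³ = (D³/A⁹)(β₃²β₆ - 3β₃β₄β₅ + 2β₄³)`, a nonzero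
scalar multiple; in particular its vanishing is an isomorphism invariant. -/
theorem relative_invariant_deg3 (A B D β₃ β₄ β₅ β₆ β₃' β₄' β₅' β₆' : ℂ)
    (hAD : A * D ≠ 0)
    (h3 : β₃' = D / A ^ 2 * β₃)
    (h4 : β₄' = D / A ^ 3 * (β₄ - 2 * (B / A) * β₃ ^ 2))
    (h5 : β₅' = D / A ^ 4 *
      (β₅ - 5 * (B / A) * β₃ * β₄ + 5 * (B / A) ^ 2 * β₃ ^ 3))
    (h6 : β₆' = D / A ^ 5 *
      (β₆ - 6 * (B / A) * β₃ * β₅ + 21 * (B / A) ^ 2 * β₃ ^ 2 * β₄ -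
        3 * (B / A) * β₄ ^ 2 - 14 * (B / A) ^ 3 * β₃ ^ 4)) :
    β₃' ^ 2 * β₆' - 3 * β₃' * β₄' * β₅' + 2 * β₄' ^ 3 =
        D ^ 3 / A ^ 9 * (β₃ ^ 2 * β₆ - 3 * β₃ * β₄ * β₅ + 2 * β₄ ^ 3) ∧
      (β₃' ^ 2 * β₆' - 3 * β₃' * β₄' * β₅' + 2 * β₄' ^ 3 = 0 ↔
        β₃ ^ 2 * β₆ - 3 * β₃ * β₄ * β₅ + 2 * β₄ ^ 3 = 0) := by
  have hA : A ≠ 0 := fun h => hAD (by simp [h])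
  have hD : D ≠ 0 := fun h => hAD (by simp [h])
  have key : β₃' ^ 2 * β₆' - 3 * β₃' * β₄' * β₅' + 2 * β₄' ^ 3 =
      D ^ 3 / A ^ 9 * (β₃ ^ 2 * β₆ - 3 * β₃ * β₄ * β₅ + 2 * β₄ ^ 3) := by
    generalize B / A = t at h4 h5 h6
    subst h3 h4 h5 h6
    field_simp
    have hAp : A ^ 27 * A⁻¹ ^ 18 = A ^ 9 := by
      rw [inv_pow]
      field_simp
    ring
  refine ⟨key, ?_⟩
  rw [key, mul_eq_zero]
  have hc : D ^ 3 / A ^ 9 ≠ 0 :=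
    div_ne_zero (pow_ne_zero 3 hD) (pow_ne_zero 9 hA)
  simp [hc]
end
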